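/- arXiv:1412.8701 — 14 statements merged into one kernel-verified Lean document; each statement's English description precedes it below -/
import Mathlib

section
/- Let X be a topological space and x ∈ X a point whose neighbourhood filter has a base consisting of closed sets. If S ⊆ X is a subspace containing x such that x has a neighbourhood base in S well-ordered by reverse inclusion, then x also has a neighbourhood base in the closure of S (in X) well-ordered by reverse inclusion. -/
open Filter Topology Set

universe u v

/-- `x` has a neighbourhood base in the subspace `S` well-ordered by reverse inclusion. -/
def HasWONhdsBase {X : Type u} [TopologicalSpace X] (x : X) (S : Set X) : Prop :=
  ∃ (o : Ordinal.{u}) (B : ↥(Set.Iio o) → Set X),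
    (∀ i, B i ⊆ S) ∧ (∀ i j, i ≤ j → B j ⊆ B i) ∧
    (𝓝[S] x).HasBasis (fun _ => True) B

/-- `X` is radial at `x`. -/
def RadialAt (X : Type u) [TopologicalSpace X] (x : X) : Prop :=
  ∀ A : Set X, x ∈ closure A →
    ∃ (o : Ordinal.{u}) (f : ↥(Set.Iio o) → X), o ≠ 0 ∧
      (∀ i, f i ∈ A) ∧ Filter.Tendsto f Filter.atTop (𝓝 x)

theorem stmt0 {X : Type u} [TopologicalSpace X] (x : X)
    (hreg : (𝓝 x).HasBasis (fun C : Set X => C ∈ 𝓝 x ∧ IsClosed C) id)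
    (S : Set X) (hxS : x ∈ S) (hS : HasWONhdsBase x S) :
    HasWONhdsBase x (closure S) := by
  obtain ⟨o, B, hBS, hmono, hbasis⟩ := hS
  refine ⟨o, fun i => closure (B i), fun i => closure_mono (hBS i),
    fun i j hij => closure_mono (hmono i j hij), ?_⟩
  constructor
  intro U
  simp only [true_and]
  constructor
  · intro hU
    -- U ∈ 𝓝[closure S] x : get open V with x ∈ V, V ∩ closure S ⊆ U
    obtain ⟨V, hVopen, hxV, hVU⟩ := mem_nhdsWithin.mp hU
    obtain ⟨C, ⟨hCnhds, hCclosed⟩, hCV⟩ := hreg.mem_iff.mp (hVopen.mem_nhds hxV)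
    -- C ∩ S ∈ 𝓝[S] x
    have h1 : S ∩ C ∈ 𝓝[S] x := inter_mem_nhdsWithin S hCnhds
    obtain ⟨i, -, hi⟩ := hbasis.mem_iff.mp h1
    refine ⟨i, ?_⟩
    have h2 : closure (B i) ⊆ C :=
      (closure_mono (hi.trans inter_subset_right)).trans hCclosed.closure_subset
    intro y hy
    exact hVU ⟨hCV (h2 hy), closure_mono (hBS i) hy⟩
  · rintro ⟨i, hi⟩
    -- closure (B i) ∈ 𝓝[closure S] x
    have hBi : B i ∈ 𝓝[S] x := hbasis.mem_iff.mpr ⟨i, trivial, subset_rfl⟩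
    obtain ⟨O, hOopen, hxO, hOS⟩ := mem_nhdsWithin.mp hBi
    refine mem_of_superset (mem_nhdsWithin.mpr ⟨O, hOopen, hxO, subset_rfl⟩) ?_
    refine subset_trans ?_ hi
    intro y hy
    exact closure_mono hOS (hOopen.inter_closure hy)
end

section
/- Let X be a topological space, Y ⊆ X a subspace, x ∈ Y, and S ⊆ Y a spoke at x with respect to Y (i.e., x ∈ S and x has a neighbourhood base in S well-ordered by reverse inclusion). Then S ∪ N_x^X is a spoke at x with respect to X, where N_x^X is the intersection of all neighbourhoods of x in X. -/
open Filter Topology Set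

universe u v

theorem stmt1 {X : Type u} [TopologicalSpace X] (Y : Set X) (x : X) (hxY : x ∈ Y)
    (S : Set X) (hSY : S ⊆ Y) (hxS : x ∈ S) (hS : HasWONhdsBase x S) :
    x ∈ S ∪ (𝓝 x).ker ∧ HasWONhdsBase x (S ∪ (𝓝 x).ker) := by
  obtain ⟨o, B, hBS, hmono, hbasis⟩ := hS
  set K := (𝓝 x).ker with hKdef
  have hKsub : ∀ U ∈ 𝓝 x, K ⊆ U := fun U hU y hy => Filter.mem_ker.mp hy U hU
  have hK : 𝓝[K] x = 𝓟 K := by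
    rw [nhdsWithin, inf_eq_right]
    intro U hU
    exact Filter.mem_principal.mpr (hKsub U hU)
  refine ⟨Or.inl hxS, o, fun i => B i ∪ K,
    fun i => union_subset_union_left K (hBS i),
    fun i j hij => union_subset_union_left K (hmono i j hij), ?_⟩
  constructor
  intro T
  simp only [true_and]
  rw [nhdsWithin_union, hK, mem_sup]
  constructor
  · rintro ⟨hT1, hT2⟩
    obtain ⟨i, -, hi⟩ := (hbasis.mem_iff.mp hT1)
    exact ⟨i, union_subset hi (Filter.mem_principal.mp hT2)⟩
  · rintro ⟨i, hi⟩
    exact ⟨hbasis.mem_iff.mpr ⟨i, trivial, (subset_union_left).trans hi⟩,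
      Filter.mem_principal.mpr ((subset_union_right).trans hi)⟩
end

section
/- Let X be a topological space and x ∈ X. If f : λ → X is an injective transfinite sequence (λ an ordinal) converging to x such that x is not in the closure of any proper initial segment f[β] for β < λ, then the set N_x ∪ ran(f) is a spoke at x: x has a neighbourhood base in the subspace N_x ∪ ran(f) well-ordered by reverse inclusion. -/
open Filter Topology Set

universe u v

/-!
Every neighbourhood of `x` contains `N_x`, so within `N_x ∪ ran f` the neighbourhood filter of `x`
is `𝓟 N_x ⊔ 𝓝[ran f] x`. Convergence puts a tail `f[≥ β]` inside every neighbourhood of `x`, and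
strictness makes every tail a relative neighbourhood: the complement of `closure f[< β]` is an
open neighbourhood of `x` meeting `ran f` only in `f[≥ β]`. The tails decrease with `β`.
-/

theorem Filter.principal_ker_le {α : Type*} (l : Filter α) : 𝓟 l.ker ≤ l :=
  giPrincipalKer.gc.l_u_le l

section

variable {X : Type u} [TopologicalSpace X]

theorem mem_ker_nhds (x : X) : x ∈ (𝓝 x).ker :=
  Filter.mem_ker.2 fun _ => mem_of_mem_nhds

theorem nhdsWithin_ker_nhds (x : X) : 𝓝[(𝓝 x).ker] x = 𝓟 (𝓝 x).ker :=
  inf_eq_right.2 (𝓝 x).principal_ker_le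

theorem hasBasis_nhdsWithin_range_of_strict {ι : Type*} [LinearOrder ι] [Nonempty ι]
    {f : ι → X} {x : X} (hconv : Tendsto f atTop (𝓝 x))
    (hstrict : ∀ β, x ∉ closure (f '' Iio β)) :
    (𝓝[range f] x).HasBasis (fun _ => True) (fun β => f '' Ici β) := by
  refine ⟨fun t => ?_⟩
  simp only [true_and, mem_nhdsWithin_iff_exists_mem_nhds_inter]
  constructor
  · rintro ⟨U, hU, hUt⟩
    obtain ⟨β, hβ⟩ := eventually_atTop.1 (hconv hU)
    exact ⟨β, image_subset_iff.2 fun α hα => hUt ⟨hβ α hα, mem_range_self α⟩⟩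
  · rintro ⟨β, hβt⟩
    refine ⟨(closure (f '' Iio β))ᶜ, isClosed_closure.compl_mem_nhds (hstrict β), ?_⟩
    rintro _ ⟨hy, α, rfl⟩
    exact hβt ⟨α, not_lt.1 fun hαβ => hy (subset_closure ⟨α, hαβ, rfl⟩), rfl⟩

end

theorem stmt2_general {X : Type u} [TopologicalSpace X] (x : X) (lam : Ordinal.{u})
    (f : ↥(Set.Iio lam) → X)
    (hconv : Filter.Tendsto f Filter.atTop (𝓝 x))
    (hstrict : ∀ β : ↥(Set.Iio lam), x ∉ closure (f '' {α | α < β})) :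
    x ∈ (𝓝 x).ker ∪ Set.range f ∧ HasWONhdsBase x ((𝓝 x).ker ∪ Set.range f) := by
  refine ⟨Or.inl (mem_ker_nhds x), ?_⟩
  rw [HasWONhdsBase, nhdsWithin_union, nhdsWithin_ker_nhds, sup_comm]
  rcases eq_or_ne lam 0 with rfl | hlam
  · -- No filter has a basis indexed by an empty type, so here the base is the constant `N_x`.
    have hrange : range f = ∅ :=
      range_eq_empty_iff.2 ⟨fun α => (not_lt_zero (mem_Iio.1 α.2)).elim⟩
    refine ⟨1, fun _ => (𝓝 x).ker, fun _ => subset_union_left, fun _ _ _ => subset_rfl,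
      ⟨fun t => ?_⟩⟩
    simp [hrange]
  · have : Nonempty (Iio lam) := ⟨⟨0, pos_iff_ne_zero.2 hlam⟩⟩
    refine ⟨lam, fun β => f '' Ici β ∪ (𝓝 x).ker, fun β => ?_, fun β γ hβγ => ?_,
      (hasBasis_nhdsWithin_range_of_strict hconv hstrict).sup_principal _⟩
    · exact union_subset (subset_union_of_subset_right (image_subset_range _ _) _)
        subset_union_left
    · exact union_subset_union_left _ (image_mono (Ici_subset_Ici.2 hβγ))

theorem stmt2 {X : Type u} [TopologicalSpace X] (x : X) (lam : Ordinal.{u})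
    (f : ↥(Set.Iio lam) → X) (hinj : Function.Injective f)
    (hconv : Filter.Tendsto f Filter.atTop (𝓝 x))
    (hstrict : ∀ β : ↥(Set.Iio lam), x ∉ closure (f '' {α | α < β})) :
    x ∈ (𝓝 x).ker ∪ Set.range f ∧ HasWONhdsBase x ((𝓝 x).ker ∪ Set.range f) :=
  stmt2_general x lam f hconv hstrict
end

section
/- Let X be a topological space and U ⊆ X an open subspace. If U (with the subspace topology) is radial and X is radial at every point of X \ U, then X is radial. -/
open Filter Topology Set

universe u v

theorem stmt3 {X : Type u} [TopologicalSpace X] (U : Set X) (hU : IsOpen U)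
    (hrad : ∀ u : ↥U, RadialAt (↥U) u)
    (hout : ∀ x ∈ Uᶜ, RadialAt X x) :
    ∀ x : X, RadialAt X x := by
  intro x
  by_cases hx : x ∈ U
  · intro A hA
    have hxUA : x ∈ closure (U ∩ A) := hU.inter_closure ⟨hx, hA⟩
    have hA' : (⟨x, hx⟩ : ↥U) ∈ closure (Subtype.val ⁻¹' A : Set ↥U) := by
      rw [closure_subtype]
      refine closure_mono ?_ hxUA
      rintro y ⟨hyU, hyA⟩
      exact ⟨⟨y, hyU⟩, hyA, rfl⟩
    obtain ⟨o, f, ho, hf, htend⟩ := hrad ⟨x, hx⟩ _ hA'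
    exact ⟨o, fun i => (f i : X), ho, hf,
      (continuous_subtype_val.tendsto _).comp htend⟩
  · exact hout x hx
end

section
/- Let X be a locally compact, non-compact Hausdorff space and let S ⊆ X be closed. Then S ∪ {∞} is a spoke at the point at infinity ∞ in the one-point compactification αX (i.e., ∞ has a neighbourhood base in S ∪ {∞} well-ordered by reverse inclusion) if and only if there exists a chain in the poset of compact subsets of S (ordered by inclusion) that is cofinal. -/
/-!
Within `(↑) '' S ∪ {∞}`, the point `∞` has the neighbourhood base `(↑) '' (S \ K) ∪ {∞}`,
`K` ranging over the compact subsets of `S`, and `K ↦ (↑) '' (S \ K) ∪ {∞}` reverses inclusion.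
So a cofinal chain of compacta, re-indexed by a well-ordered cofinal subchain, gives a well-ordered
base. Conversely, a well-ordered base `B` yields the chain of compacta `closure (S \ (↑) ⁻¹' B i)`:
the closure of `S \ (↑) ⁻¹' U` is the least closed `K` with `(↑) '' (S \ K) ∪ {∞} ⊆ U`.
-/

open Filter Topology Set

universe u v

theorem exists_monotone_ordinal_isCofinal_range (α : Type u) [LinearOrder α] :
    ∃ (o : Ordinal.{u}) (f : Iio o → α), Monotone f ∧ IsCofinal (range f) := by
  set D := {a : α | ∀ b, WellOrderingRel b a → b < a}
  have hD : IsCofinal D := isCofinal_setOfPred_imp_lt WellOrderingRel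
  -- `D` is the set of records of a well-ordering of `α`, and on records `<` refines it.
  have : WellFoundedLT D := ⟨Subrelation.wf (fun {a b} hab => by
      rcases trichotomous_of WellOrderingRel a.1 b.1 with h | h | h
      · exact h
      · exact absurd (Subtype.ext h) hab.ne
      · exact absurd (a.2 b.1 h) hab.not_gt)
    (InvImage.wf Subtype.val (IsWellFounded.wf (r := WellOrderingRel)))⟩
  refine ⟨Ordinal.type (α := D) (· < ·), fun i => (Ordinal.enum (· < ·) i : D).1, ?_, fun a => ?_⟩
  · exact StrictMono.monotone fun i j hij => Ordinal.enum_lt_enum.2 hij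
  · obtain ⟨d, hd, had⟩ := hD a
    refine ⟨d, ⟨⟨Ordinal.typein (α := D) (· < ·) ⟨d, hd⟩, Ordinal.typein_lt_type _ _⟩, ?_⟩, had⟩
    simp only [Ordinal.enum_typein]

namespace OnePoint

@[simp]
theorem preimage_coe_image_union_infty {X : Type*} (A : Set X) :
    ((↑) : X → OnePoint X) ⁻¹' ((↑) '' A ∪ {∞}) = A := by
  rw [preimage_union, preimage_image_eq A coe_injective, coe_preimage_infty, union_empty]

theorem image_union_infty_inter {X : Type*} (A B : Set X) :
    ((↑) '' A ∪ {∞}) ∩ ((↑) '' B ∪ {∞}) = ((↑) '' (A ∩ B) ∪ {∞} : Set (OnePoint X)) := by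
  rw [← inter_union_distrib_right, image_inter coe_injective]

theorem image_diff_union_infty_anti {X : Type*} (S : Set X) :
    Antitone fun K : Set X => ((↑) '' (S \ K) ∪ {∞} : Set (OnePoint X)) :=
  fun _ _ hKL => union_subset_union_left _ (image_mono (sdiff_subset_sdiff_right hKL))

variable {X : Type*} [TopologicalSpace X] [T2Space X] {S : Set X}

theorem hasBasis_nhdsWithin_infty (hS : IsClosed S) :
    (𝓝[(↑) '' S ∪ {∞}] (∞ : OnePoint X)).HasBasis (fun K => IsCompact K ∧ K ⊆ S)
      fun K => (↑) '' (S \ K) ∪ {∞} := by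
  have h_inter (K : Set X) :
      ((↑) '' Kᶜ ∪ {∞}) ∩ ((↑) '' S ∪ {∞}) = ((↑) '' (S \ K) ∪ {∞} : Set (OnePoint X)) := by
    rw [image_union_infty_inter, inter_comm, sdiff_eq]
  refine (nhdsWithin_hasBasis hasBasis_nhds_infty _).to_hasBasis
    (fun K hK => ⟨K ∩ S, ⟨hK.2.inter_right hS, inter_subset_right⟩, ?_⟩)
    fun K hK => ⟨K, ⟨hK.1.isClosed, hK.1⟩, (h_inter K).le⟩
  rw [h_inter, sdiff_inter_self_eq_sdiff]

theorem isCompact_closure_diff_preimage (hS : IsClosed S) {U : Set (OnePoint X)}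
    (hU : U ∈ 𝓝[(↑) '' S ∪ {∞}] ∞) : IsCompact (closure (S \ (↑) ⁻¹' U)) := by
  obtain ⟨K, ⟨hK, -⟩, hKU⟩ := (hasBasis_nhdsWithin_infty hS).mem_iff.1 hU
  have h_sub : S \ (↑) ⁻¹' U ⊆ K := fun x hx =>
    by_contra fun hxK => hx.2 (hKU (Or.inl ⟨x, ⟨hx.1, hxK⟩, rfl⟩))
  exact hK.of_isClosed_subset isClosed_closure (closure_minimal h_sub hK.isClosed)

theorem exists_isChain_cofinal_of_hasBasis_antitone (hS : IsClosed S) {ι : Type*}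
    [LinearOrder ι] {B : ι → Set (OnePoint X)}
    (hB : (𝓝[(↑) '' S ∪ {∞}] ∞).HasBasis (fun _ => True) B) (hB_anti : Antitone B) :
    ∃ C : Set (Set X), (∀ K ∈ C, IsCompact K ∧ K ⊆ S) ∧ IsChain (· ⊆ ·) C ∧
      ∀ K : Set X, IsCompact K → K ⊆ S → ∃ L ∈ C, K ⊆ L := by
  set g := fun i => closure (S \ (↑) ⁻¹' B i)
  have hg : Monotone g := fun i j hij =>
    closure_mono (sdiff_subset_sdiff_right (preimage_mono (hB_anti hij)))
  refine ⟨range g, forall_mem_range.2 fun i => ⟨isCompact_closure_diff_preimage hS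
    (hB.mem_of_mem trivial), closure_minimal sdiff_subset hS⟩, hg.isChain_range, fun K hK hKS => ?_⟩
  obtain ⟨i, -, hi⟩ := hB.mem_iff.1 ((hasBasis_nhdsWithin_infty hS).mem_of_mem ⟨hK, hKS⟩)
  refine ⟨g i, mem_range_self i, fun x hx => subset_closure ⟨hKS hx, fun hxB => ?_⟩⟩
  have hx_diff := preimage_mono hi hxB
  rw [preimage_coe_image_union_infty] at hx_diff
  exact hx_diff.2 hx

theorem hasBasis_nhdsWithin_infty_of_cofinal (hS : IsClosed S) {ι : Type*} {f : ι → Set X}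
    (hf : ∀ i, IsCompact (f i) ∧ f i ⊆ S)
    (hf_cof : ∀ K : Set X, IsCompact K → K ⊆ S → ∃ i, K ⊆ f i) :
    (𝓝[(↑) '' S ∪ {∞}] (∞ : OnePoint X)).HasBasis (fun _ => True)
      fun i => (↑) '' (S \ f i) ∪ {∞} :=
  (hasBasis_nhdsWithin_infty hS).to_hasBasis
    (fun K hK => (hf_cof K hK.1 hK.2).imp fun _ hi => ⟨trivial, image_diff_union_infty_anti S hi⟩)
    fun i _ => ⟨f i, hf i, subset_rfl⟩

end OnePoint

theorem stmt4_general {X : Type u} [TopologicalSpace X] [T2Space X] (S : Set X) (hS : IsClosed S) :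
    HasWONhdsBase (OnePoint.infty : OnePoint X)
        (OnePoint.some '' S ∪ {OnePoint.infty}) ↔
      ∃ C : Set (Set X), (∀ K ∈ C, IsCompact K ∧ K ⊆ S) ∧ IsChain (· ⊆ ·) C ∧
        ∀ K : Set X, IsCompact K → K ⊆ S → ∃ L ∈ C, K ⊆ L := by
  constructor
  · rintro ⟨o, B, -, hB_anti, hB⟩
    exact OnePoint.exists_isChain_cofinal_of_hasBasis_antitone hS hB fun i j => hB_anti i j
  · rintro ⟨C, hC, hC_chain, hC_cof⟩
    classical
    let := hC_chain.linearOrder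
    obtain ⟨o, f, hf_mono, hf_cof⟩ := exists_monotone_ordinal_isCofinal_range C
    refine ⟨o, fun i => OnePoint.some '' (S \ f i) ∪ {OnePoint.infty},
      fun i => union_subset_union_left _ (image_mono sdiff_subset),
      fun i j hij => OnePoint.image_diff_union_infty_anti S (hf_mono hij), ?_⟩
    refine OnePoint.hasBasis_nhdsWithin_infty_of_cofinal hS (fun i => hC _ (f i).2)
      fun K hK hKS => ?_
    obtain ⟨L, hL, hKL⟩ := hC_cof K hK hKS
    obtain ⟨_, ⟨i, rfl⟩, hLi⟩ := hf_cof ⟨L, hL⟩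
    exact ⟨i, hKL.trans hLi⟩

theorem stmt4 {X : Type u} [TopologicalSpace X] [T2Space X] [LocallyCompactSpace X]
    [NoncompactSpace X] (S : Set X) (hS : IsClosed S) :
    HasWONhdsBase (OnePoint.infty : OnePoint X)
        (OnePoint.some '' S ∪ {OnePoint.infty}) ↔
      ∃ C : Set (Set X), (∀ K ∈ C, IsCompact K ∧ K ⊆ S) ∧ IsChain (· ⊆ ·) C ∧
        ∀ K : Set X, IsCompact K → K ⊆ S → ∃ L ∈ C, K ⊆ L :=
  stmt4_general S hS
end

section
/- Let X be the one-point compactification of ω₁ × ω₂ (ordinals with the order topology, product topology), with point at infinity ⋆. Then X is radial at ⋆: for every A ⊆ ω₁ × ω₂ with ⋆ ∈ closure(A), there is a transfinite sequence in A converging to ⋆. -/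
open Filter Topology Set

universe u v

/-- The first uncountable ordinal. -/
noncomputable def om1 : Ordinal.{0} := (Cardinal.aleph 1).ord
/-- The second uncountable ordinal. -/
noncomputable def om2 : Ordinal.{0} := (Cardinal.aleph 2).ord

/-! If `∞` lies in the closure of `A ⊆ Iio c × Iio d`, then `A` is not contained in any box
`Iic a ×ˢ Iic b`, since these boxes are compact; so `A` is unbounded in one coordinate, say the
first. Picking, for every `a < c`, a point of `A` whose first coordinate exceeds `a` gives a net
indexed by the well-order `Iio c` that eventually leaves every compact set, i.e. converges to `∞`;
reindexing it by an ordinal in the required universe finishes the proof. -/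

open OnePoint

universe w

lemma Ordinal.exists_orderIso_Iio (ι : Type u) [LinearOrder ι] [WellFoundedLT ι] :
    ∃ o : Ordinal.{max u v}, Nonempty (Iio o ≃o ι) :=
  ⟨Ordinal.type (α := ULift.{v} ι) (· < ·),
    ⟨(OrderIso.ofRelIsoLT (Ordinal.enum (α := ULift.{v} ι) (· < ·))).trans
      ULift.orderIso⟩⟩

lemma exists_ordinal_net_of_tendsto {ι : Type u} [LinearOrder ι] [WellFoundedLT ι] [Nonempty ι]
    {X : Type w} {l : Filter X} {g : ι → X} (hg : Tendsto g atTop l) :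
    ∃ (o : Ordinal.{max u v}) (f : Iio o → X), o ≠ 0 ∧ (∀ i, f i ∈ range g) ∧
      Tendsto f atTop l := by
  obtain ⟨o, ⟨e⟩⟩ := Ordinal.exists_orderIso_Iio.{u, v} ι
  refine ⟨o, g ∘ e, ?_, fun i => mem_range_self _, hg.comp e.tendsto_atTop⟩
  rintro rfl
  obtain ⟨i, hi⟩ := e.symm (Classical.arbitrary ι)
  exact not_lt_zero (mem_Iio.mp hi)

lemma tendsto_cocompact_of_lt_comp {α Y : Type*} [LinearOrder α] [TopologicalSpace α]
    [ClosedIciTopology α] [TopologicalSpace Y] {p : Y → α} (hp : Continuous p) {g : α → Y}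
    (hg : ∀ a, a < p (g a)) : Tendsto g atTop (cocompact Y) :=
  have : NoMaxOrder α := ⟨fun a => ⟨_, hg a⟩⟩
  Tendsto.of_tendsto_comp
    ((tendsto_atTop_mono (fun a => (hg a).le) tendsto_id).mono_right atTop_le_cocompact)
    (comap_cocompact_le hp)

lemma OnePoint.tendsto_coe_nhds_infty {X ι : Type*} [TopologicalSpace X] {l : Filter ι}
    {g : ι → X} (hg : Tendsto g l (cocompact X)) :
    Tendsto (fun i => (g i : OnePoint X)) l (𝓝 ∞) := by
  rw [OnePoint.nhds_infty_eq]
  exact (tendsto_map.comp (hg.mono_right cocompact_le_coclosedCompact)).mono_right le_sup_left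

lemma Ordinal.isCompact_Iic_Iio {c : Ordinal.{u}} (a : Iio c) : IsCompact (Iic a) := by
  rw [Subtype.isCompact_iff, image_subtype_val_Iio_Iic, ← Icc_bot]
  exact isCompact_Icc

lemma exists_forall_lt_fst_or_snd_of_infty_mem_closure {α β : Type*}
    [LinearOrder α] [TopologicalSpace α] [ClosedIicTopology α]
    [LinearOrder β] [TopologicalSpace β] [ClosedIicTopology β]
    (hα : ∀ a : α, IsCompact (Iic a)) (hβ : ∀ b : β, IsCompact (Iic b)) {A : Set (α × β)}
    (hA : (∞ : OnePoint (α × β)) ∈ closure ((↑) '' A)) :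
    (∀ a, ∃ x ∈ A, a < x.1) ∨ ∀ b, ∃ x ∈ A, b < x.2 := by
  by_contra! h
  obtain ⟨⟨a, ha⟩, b, hb⟩ := h
  have hK : IsClosed ((↑) '' Iic a ×ˢ Iic b : Set (OnePoint (α × β))) :=
    isClosed_image_coe.2 ⟨isClosed_Iic.prod isClosed_Iic, (hα a).prod (hβ b)⟩
  have hAK : A ⊆ Iic a ×ˢ Iic b := fun x hx => ⟨ha x hx, hb x hx⟩
  exact infty_notMem_image_coe (closure_minimal (image_mono hAK) hK hA)

lemma OnePoint.exists_ordinal_net_tendsto_infty_of_forall_lt {α : Type u} {Y : Type w}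
    [LinearOrder α] [WellFoundedLT α] [Nonempty α] [TopologicalSpace α] [ClosedIciTopology α]
    [TopologicalSpace Y] {p : Y → α} (hp : Continuous p) {A : Set Y}
    (hA : ∀ a, ∃ y ∈ A, a < p y) :
    ∃ (o : Ordinal.{max u v}) (f : Iio o → OnePoint Y), o ≠ 0 ∧
      (∀ i, f i ∈ (↑) '' A) ∧ Tendsto f atTop (𝓝 ∞) := by
  choose g hgA hg using hA
  have hlim := tendsto_coe_nhds_infty (tendsto_cocompact_of_lt_comp hp hg)
  obtain ⟨o, f, ho, hf, hflim⟩ := exists_ordinal_net_of_tendsto.{u, v} hlim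
  refine ⟨o, f, ho, fun i => ?_, hflim⟩
  obtain ⟨a, ha⟩ := hf i
  exact ha ▸ mem_image_of_mem _ (hgA a)

theorem OnePoint.exists_ordinal_net_tendsto_infty_Iio_prod {c d : Ordinal.{u}}
    {A : Set (Iio c × Iio d)} (hA : (∞ : OnePoint (Iio c × Iio d)) ∈ closure ((↑) '' A)) :
    ∃ (o : Ordinal.{max (u + 1) v}) (f : Iio o → OnePoint (Iio c × Iio d)), o ≠ 0 ∧
      (∀ i, f i ∈ (↑) '' A) ∧ Tendsto f atTop (𝓝 ∞) := by
  obtain ⟨-, x, -, -⟩ := closure_nonempty_iff.1 (⟨_, hA⟩ : (closure _).Nonempty)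
  have : Nonempty (Iio c) := ⟨x.1⟩
  have : Nonempty (Iio d) := ⟨x.2⟩
  rcases exists_forall_lt_fst_or_snd_of_infty_mem_closure Ordinal.isCompact_Iic_Iio
    Ordinal.isCompact_Iic_Iio hA with h | h
  · exact exists_ordinal_net_tendsto_infty_of_forall_lt continuous_fst h
  · exact exists_ordinal_net_tendsto_infty_of_forall_lt continuous_snd h

theorem stmt5 :
    ∀ A : Set (↥(Set.Iio om1) × ↥(Set.Iio om2)),
      (OnePoint.infty : OnePoint (↥(Set.Iio om1) × ↥(Set.Iio om2))) ∈
          closure (OnePoint.some '' A) →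
      ∃ (o : Ordinal.{1}) (f : ↥(Set.Iio o) → OnePoint (↥(Set.Iio om1) × ↥(Set.Iio om2))),
        o ≠ 0 ∧ (∀ i, f i ∈ OnePoint.some '' A) ∧
        Filter.Tendsto f Filter.atTop (𝓝 OnePoint.infty) :=
  fun _ => OnePoint.exists_ordinal_net_tendsto_infty_Iio_prod.{0, 0}
end

section
/- In the one-point compactification of ω₁ × ω₂, every compact subset K of ω₁ × ω₂ is contained in a product α × β for some α < ω₁ and β < ω₂; consequently the point at infinity ⋆ is a p-point: countable intersections of neighbourhoods of ⋆ are again neighbourhoods of ⋆. -/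
open Filter Topology Set

universe u v

/-!
A compact subset of a space of ordinals `Iio o` with `o` a limit is bounded above, hence lies
below some `a < o`; projecting, a compact subset of `ω₁ × ω₂` lies in a rectangle `Iio a ×ˢ Iio b`.
Since `ω₁` and `ω₂` have uncountable cofinality, countably many such rectangles fit in one
compact rectangle `Iic A ×ˢ Iic B`, whose complement is a neighbourhood of `⋆` contained in all
the given ones.
-/

open Cardinal Order OnePoint Ordinal

theorem Set.Iio.isCompact_Iic {α : Type*} [Preorder α] [OrderBot α] [TopologicalSpace α]
    [CompactIccSpace α] {a : α} (b : Iio a) : IsCompact (Iic b) := by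
  rw [Subtype.isCompact_iff, image_subtype_val_Iio_Iic, ← Icc_bot]
  exact isCompact_Icc

theorem IsCompact.exists_forall_lt {α : Type*} [LinearOrder α] [TopologicalSpace α]
    [ClosedIciTopology α] [NoMaxOrder α] [Nonempty α] {K : Set α} (hK : IsCompact K) :
    ∃ a, ∀ x ∈ K, x < a := by
  obtain ⟨b, hb⟩ := hK.bddAbove
  obtain ⟨a, hba⟩ := exists_gt b
  exact ⟨a, fun x hx => (hb hx).trans_lt hba⟩

theorem OnePoint.iInter_mem_nhds_infty {X ι : Type*} [TopologicalSpace X]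
    (hX : ∀ K : ι → Set X, (∀ i, IsCompact (K i)) → ∃ L, IsClosed L ∧ IsCompact L ∧ ∀ i, K i ⊆ L)
    {f : ι → Set (OnePoint X)} (hf : ∀ i, f i ∈ 𝓝 ∞) : ⋂ i, f i ∈ 𝓝 (∞ : OnePoint X) := by
  choose K hK hKf using fun i => hasBasis_nhds_infty.mem_iff.1 (hf i)
  obtain ⟨L, hLc, hLk, hKL⟩ := hX K fun i => (hK i).2
  refine hasBasis_nhds_infty.mem_iff.2 ⟨L, ⟨hLc, hLk⟩, subset_iInter fun i => ?_⟩
  exact (union_subset_union_left _ (image_mono (compl_subset_compl.2 (hKL i)))).trans (hKf i)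

namespace Ordinal

variable {o o₁ o₂ : Ordinal.{u}}

theorem isSuccLimit_of_aleph0_lt_cof (ho : ℵ₀ < o.cof) : IsSuccLimit o :=
  one_lt_cof_iff.1 (one_lt_aleph0.trans ho)

theorem exists_forall_lt_of_isCompact (ho : IsSuccLimit o) {K : Set (Iio o)}
    (hK : IsCompact K) : ∃ a, ∀ x ∈ K, x < a :=
  have : Nonempty (Iio o) := ⟨⟨0, ho.pos⟩⟩
  have : NoMaxOrder (Iio o) :=
    ⟨fun a => ⟨⟨a + 1, ho.add_one_lt a.2⟩, Subtype.mk_lt_mk.2 (lt_add_one _)⟩⟩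
  hK.exists_forall_lt

theorem exists_forall_prod_lt_of_isCompact (h₁ : IsSuccLimit o₁) (h₂ : IsSuccLimit o₂)
    {K : Set (Iio o₁ × Iio o₂)} (hK : IsCompact K) : ∃ a b, ∀ p ∈ K, p.1 < a ∧ p.2 < b := by
  obtain ⟨a, ha⟩ := exists_forall_lt_of_isCompact h₁ (hK.image continuous_fst)
  obtain ⟨b, hb⟩ := exists_forall_lt_of_isCompact h₂ (hK.image continuous_snd)
  exact ⟨a, b, fun p hp => ⟨ha _ (mem_image_of_mem _ hp), hb _ (mem_image_of_mem _ hp)⟩⟩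

theorem exists_forall_le_of_countable (ho : ℵ₀ < o.cof) {ι : Type u} [Countable ι]
    (f : ι → Iio o) : ∃ b, ∀ i, f i ≤ b :=
  ⟨⟨⨆ i, (f i : Ordinal), iSup_lt_of_lt_cof (mk_le_aleph0.trans_lt ho) fun i => (f i).2⟩,
    fun i => Ordinal.le_iSup _ i⟩

theorem exists_isCompact_prod_Iio_superset (h₁ : ℵ₀ < o₁.cof) (h₂ : ℵ₀ < o₂.cof)
    {ι : Type u} [Countable ι] (K : ι → Set (Iio o₁ × Iio o₂)) (hK : ∀ i, IsCompact (K i)) :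
    ∃ L, IsClosed L ∧ IsCompact L ∧ ∀ i, K i ⊆ L := by
  choose a b hab using fun i => exists_forall_prod_lt_of_isCompact
    (isSuccLimit_of_aleph0_lt_cof h₁) (isSuccLimit_of_aleph0_lt_cof h₂) (hK i)
  obtain ⟨A, hA⟩ := exists_forall_le_of_countable h₁ a
  obtain ⟨B, hB⟩ := exists_forall_le_of_countable h₂ b
  refine ⟨Iic A ×ˢ Iic B, isClosed_Iic.prod isClosed_Iic,
    (Iio.isCompact_Iic A).prod (Iio.isCompact_Iic B), fun i p hp => ?_⟩
  exact ⟨(hab i p hp).1.le.trans (hA i), (hab i p hp).2.le.trans (hB i)⟩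

theorem aleph0_lt_cof_ord_aleph_add_one (o : Ordinal) : ℵ₀ < (ℵ_ (o + 1)).ord.cof := by
  rw [(isRegular_aleph_add_one o).cof_ord]
  exact aleph0_lt_aleph.2 (by simp)

end Ordinal

theorem stmt6 :
    (∀ K : Set (↥(Set.Iio om1) × ↥(Set.Iio om2)), IsCompact K →
      ∃ (a : ↥(Set.Iio om1)) (b : ↥(Set.Iio om2)), ∀ p ∈ K, p.1 < a ∧ p.2 < b) ∧
    (∀ f : ℕ → Set (OnePoint (↥(Set.Iio om1) × ↥(Set.Iio om2))),
      (∀ n, f n ∈ 𝓝 (OnePoint.infty : OnePoint (↥(Set.Iio om1) × ↥(Set.Iio om2)))) →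
      (⋂ n, f n) ∈ 𝓝 (OnePoint.infty : OnePoint (↥(Set.Iio om1) × ↥(Set.Iio om2)))) := by
  have h₁ : ℵ₀ < om1.cof := by simp [om1]
  have h₂ : ℵ₀ < om2.cof := by
    simpa [om2, one_add_one_eq_two] using aleph0_lt_cof_ord_aleph_add_one 1
  exact ⟨fun K => exists_forall_prod_lt_of_isCompact (isSuccLimit_of_aleph0_lt_cof h₁)
      (isSuccLimit_of_aleph0_lt_cof h₂),
    fun f => iInter_mem_nhds_infty (exists_isCompact_prod_Iio_superset h₁ h₂)⟩
end

section
/- The one-point compactification of the deleted Tychonoff plank P = ((ω+1)×(ω₁+1)) \ {(ω,ω₁)} is not radial (indeed not Fréchet-Urysohn) at the point at infinity: no transfinite sequence in ω × ω₁ converges to the corner point (ω, ω₁) of (ω+1)×(ω₁+1), yet (ω, ω₁) is in the closure of ω × ω₁. -/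
/-!
A net converging to `(ω, ω₁)` from inside `ω × ω₁` has first coordinates tending to `ω` through
natural numbers, which forces its index set to have a cofinal `ω`-sequence. The second
coordinates along that sequence are countably many ordinals below `ω₁`, so they are bounded by
some `β < ω₁`, and the net cannot eventually exceed `β` in the second coordinate.
-/

open Filter Topology Set

universe u v

abbrev Plank : Type 1 := ↥(Set.Iic Ordinal.omega0.{0}) × ↥(Set.Iic om1)

noncomputable def corner : Plank :=
  (⟨Ordinal.omega0, Set.self_mem_Iic⟩, ⟨om1, Set.self_mem_Iic⟩)

lemma mem_closure_setOf_lt_of_isSuccLimit {α : Type*} [LinearOrder α] [TopologicalSpace α]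
    [OrderTopology α] {a : α} (ha : Order.IsSuccLimit a) :
    (⟨a, self_mem_Iic⟩ : Iic a) ∈ closure {x : Iic a | (x : α) < a} := by
  have himage : ((↑) : Iic a → α) '' {x | (x : α) < a} = Iio a := by
    ext y
    exact ⟨fun ⟨x, hx, hxy⟩ => hxy ▸ hx, fun hy => ⟨⟨y, le_of_lt hy⟩, hy, rfl⟩⟩
  rw [closure_subtype, himage]
  exact ha.isLUB_Iio.mem_closure (Iio_nonempty.2 ha.not_isMin)

lemma exists_nat_cofinal_of_tendsto_omega0 {ι : Type*} [LinearOrder ι] [Nonempty ι]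
    {u : ι → Ordinal} (hu : ∀ i, u i < Ordinal.omega0)
    (h : Tendsto u atTop (𝓝 Ordinal.omega0)) : ∃ j : ℕ → ι, ∀ i, ∃ n, i < j n := by
  have hgt (n : ℕ) : ∃ j, ∀ i ≥ j, (n : Ordinal) < u i :=
    eventually_atTop.1 (h.eventually_const_lt (Ordinal.natCast_lt_omega0 n))
  choose j hj using hgt
  refine ⟨j, fun i => ?_⟩
  obtain ⟨n, hn⟩ := Ordinal.lt_omega0.1 (hu i)
  exact ⟨n, lt_of_not_ge fun hi => (hj n i hi).ne' hn⟩

lemma not_tendsto_of_nat_cofinal_of_aleph0_lt_cof {ι : Type*} [LinearOrder ι] {a : Ordinal.{0}}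
    (ha : Cardinal.aleph0 < a.cof) {v : ι → Ordinal.{0}} (hv : ∀ i, v i < a)
    {j : ℕ → ι} (hj : ∀ i, ∃ n, i ≤ j n) : ¬ Tendsto v atTop (𝓝 a) := by
  intro h
  have : Nonempty ι := ⟨j 0⟩
  set β := ⨆ n, v (j n)
  have hβ : β < a := Ordinal.iSup_lt_of_lt_cof (Cardinal.mk_nat ▸ ha) fun n => hv (j n)
  obtain ⟨k, hk⟩ := eventually_atTop.1 (h.eventually_const_lt hβ)
  obtain ⟨n, hn⟩ := hj k
  exact (hk (j n) hn).not_ge (Ordinal.le_iSup _ n)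

lemma om1_isSuccLimit : Order.IsSuccLimit om1 :=
  Cardinal.isSuccLimit_ord (Cardinal.aleph0_le_aleph 1)

lemma aleph0_lt_cof_om1 : Cardinal.aleph0 < om1.cof := by
  rw [om1, Cardinal.isRegular_aleph_one.cof_ord]
  exact Cardinal.aleph0_lt_aleph_one

theorem stmt8 :
    corner ∈ closure {p : Plank | (p.1 : Ordinal) < Ordinal.omega0 ∧ (p.2 : Ordinal) < om1} ∧
    ∀ (o : Ordinal.{1}) (f : ↥(Set.Iio o) → Plank), o ≠ 0 →
      (∀ i, ((f i).1 : Ordinal) < Ordinal.omega0 ∧ ((f i).2 : Ordinal) < om1) →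
      ¬ Filter.Tendsto f Filter.atTop (𝓝 corner) := by
  refine ⟨?_, fun o f ho hf htend => ?_⟩
  · change corner ∈ closure ({x : Iic Ordinal.omega0 | (x : Ordinal) < Ordinal.omega0} ×ˢ
      {y : Iic om1 | (y : Ordinal) < om1})
    rw [closure_prod_eq]
    exact ⟨mem_closure_setOf_lt_of_isSuccLimit Ordinal.isSuccLimit_omega0,
      mem_closure_setOf_lt_of_isSuccLimit om1_isSuccLimit⟩
  · have : Nonempty (Iio o) := ⟨⟨0, pos_iff_ne_zero.2 ho⟩⟩
    obtain ⟨j, hj⟩ := exists_nat_cofinal_of_tendsto_omega0 (fun i => (hf i).1)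
      ((continuous_subtype_val.comp continuous_fst).continuousAt.tendsto.comp htend)
    exact not_tendsto_of_nat_cofinal_of_aleph0_lt_cof aleph0_lt_cof_om1 (fun i => (hf i).2)
      (fun i => (hj i).imp fun _ => le_of_lt)
      ((continuous_subtype_val.comp continuous_snd).continuousAt.tendsto.comp htend)
end

section
/- In the Mrówka space Ψ = ω ∪ 𝒜 of a maximal almost-disjoint family 𝒜, the set 𝒜 is closed and discrete, and every countably infinite subset of 𝒜 is σ-compact and is a spoke at infinity: adjoining the point at infinity ⋆ of the one-point compactification to it yields a subspace in which ⋆ has a neighbourhood base well-ordered by reverse inclusion. -/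
open Filter Topology Set

universe u v

/-- The underlying type of the Mrówka space of an almost-disjoint family on ℕ. -/
def Mrowka (𝒜 : Set (Set ℕ)) : Type := ℕ ⊕ ↥𝒜

/-- The isolated points. -/
def Mrowka.nat {𝒜 : Set (Set ℕ)} (n : ℕ) : Mrowka 𝒜 := Sum.inl n

/-- The points corresponding to members of the family. -/
def Mrowka.pt {𝒜 : Set (Set ℕ)} (A : ↥𝒜) : Mrowka 𝒜 := Sum.inr A

/-- The Mrówka (Isbell–Mrówka, Ψ) topology: points of ℕ are isolated and each A ∈ 𝒜 has
neighbourhood base {A} ∪ (A \ F) for finite F. -/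
instance (𝒜 : Set (Set ℕ)) : TopologicalSpace (Mrowka 𝒜) :=
  TopologicalSpace.generateFrom
    ({U : Set (Mrowka 𝒜) | ∃ n : ℕ, U = {Mrowka.nat n}} ∪
     {U : Set (Mrowka 𝒜) | ∃ (A : ↥𝒜) (F : Set ℕ), F.Finite ∧
        U = {Mrowka.pt A} ∪ Mrowka.nat '' (A.1 \ F)})

/-- `𝒜` is a maximal almost-disjoint family of infinite subsets of ℕ. -/
def IsMad (𝒜 : Set (Set ℕ)) : Prop :=
  (∀ A ∈ 𝒜, A.Infinite) ∧ (∀ A ∈ 𝒜, ∀ B ∈ 𝒜, A ≠ B → (A ∩ B).Finite) ∧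
  (∀ S : Set ℕ, S.Infinite → ∃ A ∈ 𝒜, (S ∩ A).Infinite)

/-! The points of `𝒜` form a closed discrete subset of Ψ: its complement `ω` is open, and the basic
neighbourhood `{A} ∪ A` of `A` meets `𝒜` only in `A`. A compact set therefore meets a countable
`S ⊆ 𝒜` in finitely many points, so once `S` is enumerated, the sets `S ∪ {⋆}` minus finite initial
segments of the enumeration form a neighbourhood base of `⋆` in `S ∪ {⋆}` of order type `ω`. -/

lemma Set.Countable.isSigmaCompact {X : Type*} [TopologicalSpace X] {s : Set X}
    (hs : s.Countable) : IsSigmaCompact s := by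
  simpa using isSigmaCompact_biUnion hs fun x _ => (isCompact_singleton (x := x)).isSigmaCompact

lemma Set.Finite.exists_subset_image_Iio {α : Type*} {e : ℕ → α} {s : Set α} (hs : s.Finite)
    (hse : s ⊆ range e) : ∃ n, s ⊆ e '' Iio n := by
  obtain ⟨t, -, ht, rfl⟩ := exists_subset_image_finite_and.mp
    ⟨s, image_univ (f := e) ▸ hse, hs, rfl⟩
  obtain ⟨n, hn⟩ := ht.bddAbove
  exact ⟨n + 1, image_mono fun m hm => Nat.lt_succ_of_le (hn hm)⟩

theorem hasWONhdsBase_of_hasAntitoneBasis {X : Type u} [TopologicalSpace X] {x : X} {S : Set X}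
    {B : ℕ → Set X} (hB : (𝓝[S] x).HasAntitoneBasis B) (hBS : ∀ n, B n ⊆ S) :
    HasWONhdsBase x S := by
  -- `B' n = B n`; intersecting over all `n ≤ i` avoids choosing the `n` with `i = n`.
  set B' : ↥(Iio Ordinal.omega0.{u}) → Set X := fun i => ⋂ (n : ℕ) (_ : (n : Ordinal) ≤ i.1), B n
  have hB'_nat (n : ℕ) : B' ⟨n, Ordinal.natCast_lt_omega0 n⟩ = B n :=
    (iInter₂_subset (s := fun (m : ℕ) (_ : (m : Ordinal) ≤ n) => B m) n le_rfl).antisymm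
      (subset_iInter₂ fun _ hm => hB.antitone (Nat.cast_le.mp hm))
  have hB'_eq_nat (i) : ∃ n : ℕ, B' i = B n := by
    obtain ⟨n, hn⟩ := Ordinal.lt_omega0.mp i.2
    exact ⟨n, by rw [← hB'_nat]; congr; exact Subtype.ext hn⟩
  refine ⟨Ordinal.omega0, B', fun i => ?_, fun i j hij => ?_, ?_⟩
  · obtain ⟨n, hn⟩ := hB'_eq_nat i
    exact hn ▸ hBS n
  · exact subset_iInter₂ fun n hn => iInter₂_subset n (hn.trans hij)
  · refine hB.toHasBasis.to_hasBasis (fun n _ => ⟨_, trivial, (hB'_nat n).le⟩) fun i _ => ?_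
    obtain ⟨n, hn⟩ := hB'_eq_nat i
    exact ⟨n, trivial, hn.ge⟩

namespace OnePoint

lemma coe_image_compl_union_inter_coe_image_union {X : Type*} (K S : Set X) :
    ((↑) '' Kᶜ ∪ {∞}) ∩ ((↑) '' S ∪ {∞}) = ((↑) '' (S \ K) ∪ {∞} : Set (OnePoint X)) := by
  ext x
  induction x using OnePoint.rec <;> simp [and_comm]

lemma hasBasis_nhdsWithin_infty_coe_image_union {X : Type*} [TopologicalSpace X] (S : Set X) :
    (𝓝[((↑) '' S ∪ {∞} : Set (OnePoint X))] ∞).HasBasis (fun K : Set X => IsClosed K ∧ IsCompact K)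
      fun K => (↑) '' (S \ K) ∪ {∞} := by
  rw [nhdsWithin]
  simpa only [coe_image_compl_union_inter_coe_image_union] using
    hasBasis_nhds_infty.inf_principal ((↑) '' S ∪ {∞} : Set (OnePoint X))

variable {X : Type*} [TopologicalSpace X]

theorem hasAntitoneBasis_nhdsWithin_infty {S : Set X} (hSc : IsClosed S) (hSd : IsDiscrete S)
    {e : ℕ → X} (hSe : S ⊆ range e) :
    (𝓝[((↑) '' S ∪ {∞} : Set (OnePoint X))] ∞).HasAntitoneBasis
      fun n => (↑) '' (S \ e '' Iio n) ∪ {∞} := by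
  refine ⟨(hasBasis_nhdsWithin_infty_coe_image_union S).to_hasBasis (fun K ⟨_, hK⟩ => ?_)
    fun n _ => ⟨S ∩ e '' Iio n, ⟨?_, ?_⟩, ?_⟩, ?_⟩
  · have hfin : (S ∩ K).Finite := (hK.inter_left hSc).finite (hSd.mono inter_subset_left)
    obtain ⟨n, hn⟩ := hfin.exists_subset_image_Iio (inter_subset_left.trans hSe)
    refine ⟨n, trivial, union_subset_union_left _ (image_mono fun x hx => ⟨hx.1, fun hxK => ?_⟩)⟩
    exact hx.2 (hn ⟨hx.1, hxK⟩)
  · exact isClosed_of_subset_discrete_closed inter_subset_left hSd hSc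
  · exact ((finite_Iio n).image e).inter_of_right S |>.isCompact
  · rw [sdiff_self_inter]
  · intro m n hmn
    exact union_subset_union_left _ (image_mono (sdiff_subset_sdiff_right
      (image_mono (Iio_subset_Iio hmn))))

end OnePoint

namespace Mrowka

variable {𝒜 : Set (Set ℕ)}

lemma isOpen_singleton_nat (n : ℕ) : IsOpen ({nat n} : Set (Mrowka 𝒜)) :=
  TopologicalSpace.isOpen_generateFrom_of_mem (Or.inl ⟨n, rfl⟩)

lemma isOpen_insert_pt_image_nat (A : ↥𝒜) : IsOpen (insert (pt A) (nat '' A.1)) :=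
  TopologicalSpace.isOpen_generateFrom_of_mem
    (Or.inr ⟨A, ∅, finite_empty, by rw [sdiff_empty, singleton_union]⟩)

lemma isCompl_range_nat_range_pt : IsCompl (range (nat (𝒜 := 𝒜))) (range pt) :=
  isCompl_range_inl_range_inr

lemma isClosed_range_pt : IsClosed (range (pt (𝒜 := 𝒜))) := by
  rw [← isOpen_compl_iff, ← isCompl_range_nat_range_pt.eq_compl,
    ← iUnion_singleton_eq_range]
  exact isOpen_iUnion isOpen_singleton_nat

lemma isDiscrete_range_pt : IsDiscrete (range (pt (𝒜 := 𝒜))) := by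
  refine isDiscrete_iff_forall_mem_exists_isOpen.mpr ?_
  rintro _ ⟨A, rfl⟩
  refine ⟨_, isOpen_insert_pt_image_nat A, ?_⟩
  rw [insert_inter_of_mem (mem_range_self A),
    (isCompl_range_nat_range_pt.disjoint.mono_left (image_subset_range nat A.1)).inter_eq,
    insert_empty_eq]

end Mrowka

theorem stmt10_general (𝒜 : Set (Set ℕ)) :
    IsClosed (Set.range (Mrowka.pt (𝒜 := 𝒜))) ∧
    DiscreteTopology ↥(Set.range (Mrowka.pt (𝒜 := 𝒜))) ∧
    ∀ T : Set ↥𝒜, T.Countable → T.Infinite →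
      IsSigmaCompact (Mrowka.pt '' T) ∧
      HasWONhdsBase (OnePoint.infty : OnePoint (Mrowka 𝒜))
        (OnePoint.some '' (Mrowka.pt '' T) ∪ {OnePoint.infty}) := by
  refine ⟨Mrowka.isClosed_range_pt, Mrowka.isDiscrete_range_pt.to_subtype,
    fun T hT _ => ⟨(hT.image _).isSigmaCompact, ?_⟩⟩
  have : Nonempty (Mrowka 𝒜) := ⟨Mrowka.nat 0⟩
  obtain ⟨e, he⟩ := countable_iff_exists_subset_range.mp (hT.image Mrowka.pt)
  have hsub : Mrowka.pt '' T ⊆ range Mrowka.pt := image_subset_range _ _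
  exact hasWONhdsBase_of_hasAntitoneBasis
    (OnePoint.hasAntitoneBasis_nhdsWithin_infty
      (isClosed_of_subset_discrete_closed hsub Mrowka.isDiscrete_range_pt Mrowka.isClosed_range_pt)
      (Mrowka.isDiscrete_range_pt.mono hsub) he)
    fun n => union_subset_union_left _ (image_mono sdiff_subset)

theorem stmt10 (𝒜 : Set (Set ℕ)) (h : IsMad 𝒜) :
    IsClosed (Set.range (Mrowka.pt (𝒜 := 𝒜))) ∧
    DiscreteTopology ↥(Set.range (Mrowka.pt (𝒜 := 𝒜))) ∧
    ∀ T : Set ↥𝒜, T.Countable → T.Infinite →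
      IsSigmaCompact (Mrowka.pt '' T) ∧
      HasWONhdsBase (OnePoint.infty : OnePoint (Mrowka 𝒜))
        (OnePoint.some '' (Mrowka.pt '' T) ∪ {OnePoint.infty}) :=
  stmt10_general 𝒜
end

section
/- Let 𝒜 be a maximal almost-disjoint family on ω and S ⊆ ω ∪ 𝒜 a closed subset of the Mrówka space Ψ. If for every finite ℱ ⊆ S ∩ 𝒜 the set (S ∩ ω) \ ⋃ℱ is infinite, then the set ℬ = {A ∈ S ∩ 𝒜 : A ∩ S ∩ ω is infinite} is infinite. -/
/-! If `ℬ` were finite, maximality would give `A ∈ 𝒜` meeting `(S ∩ ω) \ ⋃ ℬ` in an infinite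
set; as `S` is closed this puts `A` in `S`, hence in `ℬ`, which is absurd since `A` meets the
complement of `⋃ ℬ`. -/

open Filter Topology Set

universe u v

namespace Mrowka

variable {𝒜 : Set (Set ℕ)}

lemma exists_finite_nat_image_diff_subset_of_isOpen {A : ↥𝒜} {U : Set (Mrowka 𝒜)}
    (hU : IsOpen U) (hA : pt A ∈ U) :
    ∃ F : Set ℕ, F.Finite ∧ nat '' ((A : Set ℕ) \ F) ⊆ U := by
  induction hU with
  | basic V hV =>
    rcases hV with ⟨n, rfl⟩ | ⟨A', F, hF, rfl⟩
    · exact absurd hA (fun h => Sum.inr_ne_inl (mem_singleton_iff.1 h))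
    · rcases hA with hA | ⟨m, -, hm⟩
      · obtain rfl : A' = A := Sum.inr.inj hA.symm
        exact ⟨F, hF, subset_union_right⟩
      · exact absurd hm Sum.inl_ne_inr
  | univ => exact ⟨∅, finite_empty, subset_univ _⟩
  | inter V W _ _ ihV ihW =>
    obtain ⟨F₁, hF₁, hV⟩ := ihV hA.1
    obtain ⟨F₂, hF₂, hW⟩ := ihW hA.2
    refine ⟨F₁ ∪ F₂, hF₁.union hF₂, subset_inter ?_ ?_⟩
    · exact (image_mono (sdiff_subset_sdiff_right subset_union_left)).trans hV
    · exact (image_mono (sdiff_subset_sdiff_right subset_union_right)).trans hW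
  | sUnion s _ ih =>
    obtain ⟨V, hVs, hAV⟩ := hA
    obtain ⟨F, hF, hV⟩ := ih V hVs hAV
    exact ⟨F, hF, hV.trans (subset_sUnion_of_mem hVs)⟩

lemma pt_mem_closure_of_infinite {S : Set (Mrowka 𝒜)} {A : ↥𝒜}
    (hAS : ((A : Set ℕ) ∩ {n : ℕ | nat n ∈ S}).Infinite) : pt A ∈ closure S := by
  refine mem_closure_iff.2 fun U hU hAU => ?_
  obtain ⟨F, hF, hFU⟩ := exists_finite_nat_image_diff_subset_of_isOpen hU hAU
  obtain ⟨n, ⟨hnA, hnS⟩, hnF⟩ := (hAS.sdiff hF).nonempty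
  exact ⟨nat n, hFU ⟨n, ⟨hnA, hnF⟩, rfl⟩, hnS⟩

end Mrowka

theorem stmt11 (𝒜 : Set (Set ℕ)) (h : IsMad 𝒜) (S : Set (Mrowka 𝒜)) (hS : IsClosed S)
    (hfin : ∀ F : Set ↥𝒜, F.Finite → (∀ A ∈ F, Mrowka.pt A ∈ S) →
      ({n : ℕ | Mrowka.nat n ∈ S} \ ⋃ A ∈ F, (A : Set ℕ)).Infinite) :
    {A : ↥𝒜 | Mrowka.pt A ∈ S ∧
      ((A : Set ℕ) ∩ {n : ℕ | Mrowka.nat n ∈ S}).Infinite}.Infinite := by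
  intro hℬ
  obtain ⟨A, hA, hTA⟩ := h.2.2 _ (hfin _ hℬ fun _ hB => hB.1)
  have hAS : (A ∩ {n : ℕ | Mrowka.nat n ∈ S}).Infinite :=
    hTA.mono fun _ hn => ⟨hn.2, hn.1.1⟩
  have hAℬ : Mrowka.pt ⟨A, hA⟩ ∈ S ∧ (A ∩ {n : ℕ | Mrowka.nat n ∈ S}).Infinite :=
    ⟨hS.closure_subset (Mrowka.pt_mem_closure_of_infinite hAS), hAS⟩
  obtain ⟨n, ⟨-, hnℬ⟩, hnA⟩ := hTA.nonempty
  exact hnℬ (mem_biUnion (x := ⟨A, hA⟩) hAℬ hnA)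
end

section
/- Let X be a topological space and x ∈ X a point with character χ(x, X) < 𝔭, where 𝔭 is the pseudointersection number. Then X is subsequential at x: for every countable subset A ⊆ X with x ∈ closure(A), there is an ordinary (ω-indexed) sequence with terms in A converging to x. -/
open Filter Topology Set

universe u v

/-- The character of a point: least cardinality of a neighbourhood base at `x`. -/
noncomputable def charAt {X : Type u} [TopologicalSpace X] (x : X) : Cardinal.{u} :=
  sInf { c | ∃ B : Set (Set X), Cardinal.mk B = c ∧ (𝓝 x).HasBasis (· ∈ B) id }

/-- The pseudointersection number 𝔭. -/
noncomputable def pseudoP : Cardinal.{0} :=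
  sInf { c | ∃ F : Set (Set ℕ), Cardinal.mk F = c ∧ (∀ A ∈ F, A.Infinite) ∧
    (∀ G : Set (Set ℕ), G ⊆ F → G.Finite → G.Nonempty → (⋂₀ G).Infinite) ∧
    ¬ ∃ P : Set ℕ, P.Infinite ∧ ∀ A ∈ F, (P \ A).Finite }

theorem stmt13 {X : Type u} [TopologicalSpace X] (x : X)
    (hchi : charAt x < Cardinal.lift.{u} pseudoP) :
    ∀ A : Set X, A.Countable → x ∈ closure A →
      ∃ s : ℕ → X, (∀ n, s n ∈ A) ∧ Filter.Tendsto s Filter.atTop (𝓝 x) := by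
  intro A hAc hxA
  -- Case 1: some point of A lies in every neighbourhood of x
  by_cases hN : ∃ a ∈ A, ∀ U ∈ 𝓝 x, a ∈ U
  · obtain ⟨a, haA, ha⟩ := hN
    refine ⟨fun _ => a, fun _ => haA, ?_⟩
    rw [Filter.tendsto_def]
    intro U hU
    simp [ha U hU]
  push_neg at hN
  -- A is nonempty
  have hAne : A.Nonempty := by
    rcases eq_empty_or_nonempty A with h | h
    · simp [h, closure_empty] at hxA
    · exact h
  obtain ⟨e, he⟩ := hAc.exists_eq_range hAne
  -- minimal base
  have hne : { c | ∃ B : Set (Set X), Cardinal.mk B = c ∧ (𝓝 x).HasBasis (· ∈ B) id }.Nonempty :=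
    ⟨_, {s | s ∈ 𝓝 x}, rfl, (𝓝 x).basis_sets⟩
  obtain ⟨B, hBmk, hB⟩ : charAt x ∈ _ := csInf_mem hne
  -- Key: for every neighbourhood U, the index set {n | e n ∈ U} is infinite
  have Sinf : ∀ U ∈ 𝓝 x, {n : ℕ | e n ∈ U}.Infinite := by
    intro U hU
    by_contra hfin
    rw [Set.not_infinite] at hfin
    have hVex : ∀ n : ℕ, n ∈ {n : ℕ | e n ∈ U} → ∃ V ∈ 𝓝 x, e n ∉ V := by
      intro n _
      exact hN (e n) (he ▸ Set.mem_range_self n)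
    choose! V hV1 hV2 using hVex
    have hW : (U ∩ ⋂ n ∈ {n : ℕ | e n ∈ U}, V n) ∈ 𝓝 x :=
      Filter.inter_mem hU ((Filter.biInter_mem hfin).2 hV1)
    obtain ⟨a, haW, haA⟩ := mem_closure_iff_nhds.1 hxA _ hW
    obtain ⟨m, rfl⟩ : ∃ m, e m = a := by rwa [he, Set.mem_range] at haA
    have hmT : m ∈ {n : ℕ | e n ∈ U} := haW.1
    exact hV2 m hmT (Set.mem_iInter₂.mp haW.2 m hmT)
  -- build the family F of trace index sets
  set g : ↥B → Set ℕ := fun U => {n : ℕ | e n ∈ (U : Set X)} with hg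
  set F : Set (Set ℕ) := Set.range g with hF
  have hmemnhds : ∀ U : ↥B, (U : Set X) ∈ 𝓝 x := fun U => hB.mem_of_mem U.2
  have hF1 : ∀ S ∈ F, S.Infinite := by
    rintro S ⟨U, rfl⟩
    exact Sinf _ (hmemnhds U)
  -- B is nonempty
  obtain ⟨U₀, hU₀, -⟩ := hB.mem_iff.mp (Filter.univ_mem (f := 𝓝 x))
  have hF2 : ∀ G : Set (Set ℕ), G ⊆ F → G.Finite → G.Nonempty → (⋂₀ G).Infinite := by
    intro G hGF hGfin hGne
    have hu : ∀ S : Set ℕ, ∃ U : ↥B, S ∈ G → g U = S := by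
      intro S
      by_cases hS : S ∈ G
      · obtain ⟨U, hU⟩ := hGF hS
        exact ⟨U, fun _ => hU⟩
      · exact ⟨⟨U₀, hU₀⟩, fun h => absurd h hS⟩
    choose u hu using hu
    have hV : (⋂ S ∈ G, ((u S : Set X))) ∈ 𝓝 x :=
      (Filter.biInter_mem hGfin).2 fun S _ => hmemnhds (u S)
    refine (Sinf _ hV).mono ?_
    intro n hn
    rw [Set.mem_sInter]
    intro S hS
    have : e n ∈ (u S : Set X) := Set.mem_iInter₂.mp hn S hS
    rw [← hu S hS]
    exact this
  -- cardinality bound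
  have hcard : Cardinal.mk F < pseudoP := by
    have h1 : Cardinal.lift.{u} (Cardinal.mk F) ≤ Cardinal.lift.{0} (Cardinal.mk ↥B) :=
      Cardinal.mk_range_le_lift
    rw [Cardinal.lift_uzero, hBmk] at h1
    have := lt_of_le_of_lt h1 hchi
    exact Cardinal.lift_lt.mp this
  -- pseudointersection exists
  have hP : ∃ P : Set ℕ, P.Infinite ∧ ∀ S ∈ F, (P \ S).Finite := by
    by_contra h
    have hmem : Cardinal.mk F ∈ { c | ∃ F' : Set (Set ℕ), Cardinal.mk F' = c ∧
        (∀ A ∈ F', A.Infinite) ∧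
        (∀ G : Set (Set ℕ), G ⊆ F' → G.Finite → G.Nonempty → (⋂₀ G).Infinite) ∧
        ¬ ∃ P : Set ℕ, P.Infinite ∧ ∀ A ∈ F', (P \ A).Finite } := ⟨F, rfl, hF1, hF2, h⟩
    exact absurd (show pseudoP ≤ Cardinal.mk F from csInf_le' hmem) (not_le.2 hcard)
  obtain ⟨P, hPinf, hPsub⟩ := hP
  have hPinf' : (setOf (· ∈ P)).Infinite := hPinf
  refine ⟨fun n => e (Nat.nth (· ∈ P) n), fun n => he ▸ Set.mem_range_self _, ?_⟩
  rw [hB.tendsto_right_iff]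
  intro U hU
  have hfin : (P \ g ⟨U, hU⟩).Finite := hPsub _ ⟨⟨U, hU⟩, rfl⟩
  obtain ⟨N, hN'⟩ := hfin.bddAbove
  filter_upwards [Filter.eventually_ge_atTop (N + 1)] with n hn
  have hnth_mem : Nat.nth (· ∈ P) n ∈ P := Nat.nth_mem_of_infinite hPinf' n
  have hge : n ≤ Nat.nth (· ∈ P) n := Nat.le_nth fun hf => (hPinf' hf).elim
  by_contra hnot
  have : Nat.nth (· ∈ P) n ∈ P \ g ⟨U, hU⟩ := ⟨hnth_mem, hnot⟩
  have := hN' this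
  omega
end

section
/- Let X = (ω+1) × ω₁ and let γX be a Hausdorff compactification of X whose remainder γX \ X is infinite. Then the remainder γX \ X is homeomorphic to ω+1. -/
open Filter Topology Set

universe u v

abbrev X15 : Type 1 := ↥(Set.Iic Ordinal.omega0.{0}) × ↥(Set.Iio om1)

/-!
Every continuous map from `ω₁` to a compact Hausdorff space converges, since two closed unbounded
subsets of `ω₁` meet. So each column `{n} × ω₁` of `X` has a limit `colLim e n` in `γX`; it lies in
the remainder. As countable subsets of `ω₁` are bounded, the escape times of the countably many
columns from a closed set have a common bound, which gives both the continuity of `colLim e` on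
`ω + 1` and the fact that it exhausts the remainder. A Hausdorff continuous image of `ω + 1` has at
most one non-isolated point, so when infinite it is, like `ω + 1`, the one-point compactification
of `ℕ`.
-/

namespace TychonoffPlank

abbrev OmegaSucc : Type 1 := ↥(Set.Iic Ordinal.omega0.{0})

abbrev OmegaOne : Type 1 := ↥(Set.Iio om1)

lemma om1_eq_omega_one : om1 = Ordinal.omega 1 := Cardinal.ord_aleph 1

lemma om1_isSuccLimit : Order.IsSuccLimit om1 :=
  Cardinal.isSuccLimit_ord (Cardinal.aleph0_le_aleph 1)

namespace OmegaSucc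

def top : OmegaSucc := ⟨Ordinal.omega0, Set.mem_Iic.mpr le_rfl⟩

instance : CompactSpace OmegaSucc :=
  isCompact_iff_compactSpace.mp (Set.Icc_bot (a := Ordinal.omega0.{0}) ▸ isCompact_Icc)

instance : Countable OmegaSucc := by
  have hsub : Set.Iic Ordinal.omega0 ⊆ insert Ordinal.omega0 (Set.range ((↑) : ℕ → Ordinal)) :=
    fun o ho => (eq_or_lt_of_le ho).imp id fun h => (Ordinal.lt_omega0.1 h).imp fun n hn => hn.symm
  exact (((Set.countable_range _).insert _).mono hsub).to_subtype

instance : Infinite OmegaSucc :=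
  Infinite.of_injective (fun n : ℕ => (⟨n, (Ordinal.natCast_lt_omega0 n).le⟩ : OmegaSucc))
    fun _ _ h => Nat.cast_injective (congrArg Subtype.val h)

lemma isOpen_singleton {x : OmegaSucc} (hx : x ≠ top) : IsOpen ({x} : Set OmegaSucc) := by
  have hlt : x.val < Ordinal.omega0 := lt_of_le_of_ne x.2 fun h => hx (Subtype.ext h)
  have hx' : ({x} : Set OmegaSucc) = Subtype.val ⁻¹' {x.val} := by
    ext y; simp only [Set.mem_singleton_iff, Set.mem_preimage, Subtype.ext_iff]
  rw [hx']
  exact (SuccOrder.isOpen_singleton_iff.2 fun hlim =>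
    (Ordinal.omega0_le_of_isSuccLimit hlim).not_gt hlt).preimage continuous_subtype_val

lemma isOpen_of_top_notMem {s : Set OmegaSucc} (hs : top ∉ s) : IsOpen s := by
  rw [← Set.biUnion_of_singleton s]
  exact isOpen_biUnion fun x hx => isOpen_singleton (ne_of_mem_of_not_mem hx hs)

lemma continuous_of_continuousAt_top {Y : Type*} [TopologicalSpace Y] {f : OmegaSucc → Y}
    (hf : ContinuousAt f top) : Continuous f := by
  refine continuous_iff_continuousAt.2 fun x => ?_
  rcases eq_or_ne x top with rfl | hx
  · exact hf
  · rw [ContinuousAt, (isOpen_singleton_iff_nhds_eq_pure x).1 (isOpen_singleton hx)]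
    exact tendsto_pure_nhds f x

lemma isOpen_singleton_of_surjective {Y : Type*} [TopologicalSpace Y] [T2Space Y]
    {f : OmegaSucc → Y} (hf : Continuous f) (hsurj : Function.Surjective f) {y : Y}
    (hy : y ≠ f top) : IsOpen ({y} : Set Y) := by
  have hfiber : IsClosed (f ⁻¹' {y})ᶜ := (isOpen_of_top_notMem (s := f ⁻¹' {y})
    fun h => hy (Set.mem_singleton_iff.1 h).symm).isClosed_compl
  have hclosed : IsClosed (f '' (f ⁻¹' {y})ᶜ) := (hfiber.isCompact.image hf).isClosed
  rwa [Set.image_compl_preimage, hsurj.range_eq, ← Set.compl_eq_univ_sdiff,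
    isClosed_compl_iff] at hclosed

end OmegaSucc

lemma nonempty_onePoint_nat_homeomorph {Y : Type*} [TopologicalSpace Y] [CompactSpace Y]
    [T2Space Y] [Countable Y] (p : Y) (hinf : ({p}ᶜ : Set Y).Infinite)
    (hiso : ∀ y ≠ p, IsOpen ({y} : Set Y)) : Nonempty (OnePoint ℕ ≃ₜ Y) := by
  have : Infinite ↥({p}ᶜ : Set Y) := hinf.to_subtype
  obtain ⟨_⟩ := nonempty_denumerable ↥({p}ᶜ : Set Y)
  let f : ℕ → Y := Subtype.val ∘ (Denumerable.eqv ↥({p}ᶜ : Set Y)).symm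
  have hf_range : Set.range f = {p}ᶜ :=
    ((Denumerable.eqv _).symm.surjective.range_comp Subtype.val).trans Subtype.range_coe
  have hf_open : IsOpenMap f := fun s _ => by
    rw [← Set.biUnion_of_singleton (f '' s)]
    refine isOpen_biUnion fun y hy => hiso y ?_
    exact hf_range.subset (Set.image_subset_range f s hy)
  have hf_emb : Topology.IsEmbedding f :=
    (IsOpenEmbedding.of_continuous_injective_isOpenMap continuous_of_discreteTopology
      (Subtype.val_injective.comp (Equiv.injective _)) hf_open).isEmbedding
  exact ⟨OnePoint.equivOfIsEmbeddingOfRangeEq p f hf_emb hf_range⟩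

theorem nonempty_homeomorph_omegaSucc_of_surjective {Y : Type*} [TopologicalSpace Y] [T2Space Y]
    [Infinite Y] {f : OmegaSucc → Y} (hf : Continuous f) (hsurj : Function.Surjective f) :
    Nonempty (Y ≃ₜ OmegaSucc) := by
  have : CompactSpace Y := hsurj.compactSpace hf
  have : Countable Y := hsurj.countable
  obtain ⟨hY⟩ := nonempty_onePoint_nat_homeomorph (f OmegaSucc.top)
    (Set.finite_singleton _).infinite_compl
    fun y hy => OmegaSucc.isOpen_singleton_of_surjective hf hsurj hy
  obtain ⟨hω⟩ := nonempty_onePoint_nat_homeomorph OmegaSucc.top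
    (Set.finite_singleton _).infinite_compl fun x hx => OmegaSucc.isOpen_singleton hx
  exact ⟨hY.symm.trans hω⟩

lemma exists_monotone_seq_mem {α : Type*} [Preorder α] [Nonempty α] (S : ℕ → Set α)
    (hS : ∀ n a, ∃ b ∈ S n, a ≤ b) : ∃ t : ℕ → α, Monotone t ∧ ∀ n, t n ∈ S n := by
  choose g hgS hle using hS
  let t : ℕ → α := fun n => Nat.rec (g 0 (Classical.arbitrary α)) (fun k x => g (k + 1) x) n
  exact ⟨t, monotone_nat_of_le_succ fun n => hle _ _, fun n => by cases n <;> exact hgS _ _⟩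

namespace OmegaOne

instance : NoMaxOrder OmegaOne :=
  ⟨fun a => ⟨⟨Order.succ a.val, om1_isSuccLimit.succ_lt a.2⟩, Order.lt_succ a.val⟩⟩

instance : Nonempty OmegaOne := ⟨⟨0, om1_isSuccLimit.bot_lt⟩⟩

lemma iSup_val_lt {ι : Type*} [Countable ι] (f : ι → OmegaOne) : ⨆ i, (f i).val < om1 := by
  have hf : ∀ i, (f i).val < Ordinal.omega 1 := fun i => om1_eq_omega_one ▸ (f i).2
  simpa only [om1_eq_omega_one] using Ordinal.iSup_lt_omega_one hf

lemma bddAbove_range_val {ι : Type*} (f : ι → OmegaOne) :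
    BddAbove (Set.range fun i => (f i).val) :=
  ⟨om1, Set.forall_mem_range.2 fun i => (f i).2.le⟩

lemma exists_forall_le_of_countable {ι : Type*} [Countable ι] (f : ι → OmegaOne) :
    ∃ δ : OmegaOne, ∀ i, f i ≤ δ :=
  ⟨⟨_, iSup_val_lt f⟩, fun i => le_ciSup (bddAbove_range_val f) i⟩

lemma exists_tendsto_of_monotone {t : ℕ → OmegaOne} (ht : Monotone t) :
    ∃ δ : OmegaOne, Tendsto t atTop (𝓝 δ) :=
  ⟨⟨_, iSup_val_lt t⟩, IsEmbedding.subtypeVal.tendsto_nhds_iff.2 <|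
    tendsto_atTop_ciSup (fun _ _ h => ht h) (bddAbove_range_val t)⟩

lemma isCompact_Iic (δ : OmegaOne) : IsCompact (Set.Iic δ) := by
  rw [IsEmbedding.subtypeVal.isCompact_iff, Set.image_subtype_val_Iio_Iic, ← Set.Icc_bot]
  exact isCompact_Icc

/-- The supremum of an increasing sequence visiting `A` and `B` alternately lies in both. -/
lemma inter_nonempty_of_isClosed_of_cofinal {A B : Set OmegaOne} (hA : IsClosed A)
    (hB : IsClosed B) (hAc : ∀ a, ∃ b ∈ A, a ≤ b) (hBc : ∀ a, ∃ b ∈ B, a ≤ b) :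
    (A ∩ B).Nonempty := by
  obtain ⟨t, ht, htS⟩ := exists_monotone_seq_mem (fun n => if Even n then A else B)
    fun n => by split_ifs; exacts [hAc, hBc]
  obtain ⟨δ, hδ⟩ := exists_tendsto_of_monotone ht
  have hA' : δ ∈ A := hA.mem_of_tendsto (hδ.comp (StrictMono.tendsto_atTop (φ := (2 * ·))
    fun _ _ h => by simp only; omega))
    (Eventually.of_forall fun n => by simpa using htS (2 * n))
  have hB' : δ ∈ B := hB.mem_of_tendsto (hδ.comp (StrictMono.tendsto_atTop (φ := (2 * · + 1))
    fun _ _ h => by simp only; omega))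
    (Eventually.of_forall fun n => by simpa using htS (2 * n + 1))
  exact ⟨δ, hA', hB'⟩

/-- Two distinct cluster points would give two disjoint closed unbounded subsets of `ω₁`. -/
lemma exists_tendsto_atTop_of_continuous {γ : Type*} [TopologicalSpace γ] [CompactSpace γ]
    [T2Space γ] {f : OmegaOne → γ} (hf : Continuous f) : ∃ p, Tendsto f atTop (𝓝 p) := by
  have hunique : ∀ p q, MapClusterPt p atTop f → MapClusterPt q atTop f → p = q := by
    intro p q hp hq
    by_contra hpq
    obtain ⟨C, ⟨hCp, hC⟩, D, ⟨hDq, hD⟩, hCD⟩ :=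
      (closed_nhds_basis p).disjoint_iff (closed_nhds_basis q) |>.1 (disjoint_nhds_nhds.2 hpq)
    have hcofinal : ∀ {r} {E : Set γ}, MapClusterPt r atTop f → E ∈ 𝓝 r →
        ∀ a, ∃ b ∈ f ⁻¹' E, a ≤ b := fun hr hE a => by
      obtain ⟨b, hab, hb⟩ := frequently_atTop.1 (hr.frequently hE) a
      exact ⟨b, hb, hab⟩
    obtain ⟨β, hβC, hβD⟩ := inter_nonempty_of_isClosed_of_cofinal (hC.preimage hf)
      (hD.preimage hf) (hcofinal hp hCp) (hcofinal hq hDq)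
    exact hCD.le_bot ⟨hβC, hβD⟩
  obtain ⟨p, hp⟩ := exists_clusterPt_of_compactSpace (map f atTop)
  exact ⟨p, tendsto_nhds_of_unique_mapClusterPt fun q hq => hunique q p hq hp⟩

end OmegaOne

section Plank

variable {γ : Type*} [TopologicalSpace γ] (e : X15 → γ)

/-- The value at `(n, ω₁)` of the extension of `e` to the Tychonoff plank `(ω + 1) × (ω₁ + 1)`. -/
noncomputable def colLim (n : OmegaSucc) : γ :=
  haveI : Nonempty γ := ⟨e (n, Classical.arbitrary OmegaOne)⟩
  limUnder atTop fun β : OmegaOne => e (n, β)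

variable {e}

lemma tendsto_colLim [CompactSpace γ] [T2Space γ] (he : Continuous e) (n : OmegaSucc) :
    Tendsto (fun β : OmegaOne => e (n, β)) atTop (𝓝 (colLim e n)) :=
  tendsto_nhds_limUnder <| OmegaOne.exists_tendsto_atTop_of_continuous <|
    he.comp (continuous_const.prodMk continuous_id)

lemma colLim_notMem_range [CompactSpace γ] [T2Space γ] (he : IsEmbedding e) (n : OmegaSucc) :
    colLim e n ∉ Set.range e := by
  rintro ⟨x, hx⟩
  have hcol := he.tendsto_nhds_iff.2 (hx ▸ tendsto_colLim he.continuous n)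
  exact not_tendsto_nhds_of_tendsto_atTop tendsto_id x.2 (continuous_snd.tendsto x |>.comp hcol)

lemma continuous_colLim [CompactSpace γ] [T2Space γ] (he : Continuous e) :
    Continuous (colLim e) := by
  refine OmegaSucc.continuous_of_continuousAt_top <|
    (closed_nhds_basis _).tendsto_right_iff.2 fun C ⟨hCn, hC⟩ => ?_
  by_contra hfreq
  rw [Filter.not_eventually] at hfreq
  have hbound : ∀ n, ∃ α : OmegaOne, ∀ β ≥ α, colLim e n ∉ C → e (n, β) ∉ C := by
    intro n
    by_cases hn : colLim e n ∈ C
    · exact ⟨Classical.arbitrary _, fun _ _ h => absurd hn h⟩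
    · obtain ⟨α, hα⟩ := eventually_atTop.1 (tendsto_colLim he n (hC.isOpen_compl.mem_nhds hn))
      exact ⟨α, fun β hβ _ => hα β hβ⟩
  choose α hα using hbound
  obtain ⟨δ, hδ⟩ := OmegaOne.exists_forall_le_of_countable α
  obtain ⟨β, hβC, hδβ⟩ := ((tendsto_colLim he OmegaSucc.top).eventually
    (interior_mem_nhds.2 hCn) |>.and (eventually_ge_atTop δ)).exists
  have hrow : ∀ᶠ n in 𝓝 OmegaSucc.top, e (n, β) ∈ interior C :=
    (he.comp (continuous_id.prodMk continuous_const)).continuousAt.eventually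
      (isOpen_interior.mem_nhds hβC)
  obtain ⟨n, hnC, hnβ⟩ := (hfreq.and_eventually hrow).exists
  exact hα n β ((hδ n).trans hδβ) hnC (interior_subset hnβ)

lemma mem_range_colLim [CompactSpace γ] [T2Space γ] (he : IsEmbedding e) (hd : DenseRange e)
    {y : γ} (hy : y ∉ Set.range e) : y ∈ Set.range (colLim e) := by
  by_contra hyK
  have hK : IsClosed (Set.range (colLim e)) :=
    (isCompact_range (continuous_colLim he.continuous)).isClosed
  obtain ⟨C, ⟨hCy, hC⟩, hCK⟩ := (closed_nhds_basis y).mem_iff.1 (hK.isOpen_compl.mem_nhds hyK)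
  have hbound : ∀ n, ∃ α : OmegaOne, ∀ β ≥ α, e (n, β) ∉ C := fun n =>
    eventually_atTop.1 (tendsto_colLim he.continuous n
      (hC.isOpen_compl.mem_nhds fun h => hCK h ⟨n, rfl⟩))
  choose α hα using hbound
  obtain ⟨δ, hδ⟩ := OmegaOne.exists_forall_le_of_countable α
  have hrect : IsClosed (e '' (Set.univ ×ˢ Set.Iic δ)) :=
    ((isCompact_univ.prod (OmegaOne.isCompact_Iic δ)).image he.continuous).isClosed
  obtain ⟨_, ⟨x, rfl⟩, hxC, hxrect⟩ := hd.inter_nhds_nonempty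
    (Filter.inter_mem hCy (hrect.isOpen_compl.mem_nhds fun ⟨z, _, hz⟩ => hy ⟨z, hz⟩))
  have hδx : δ < x.2 := lt_of_not_ge fun h => hxrect ⟨x, ⟨Set.mem_univ _, h⟩, rfl⟩
  exact hα x.1 x.2 ((hδ x.1).trans hδx.le) hxC

end Plank

end TychonoffPlank

open TychonoffPlank in
theorem stmt15 {γ : Type v} [TopologicalSpace γ] [CompactSpace γ] [T2Space γ]
    (e : X15 → γ) (he : Topology.IsEmbedding e) (hd : DenseRange e)
    (hinf : ((Set.range e)ᶜ).Infinite) :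
    Nonempty (↥((Set.range e)ᶜ) ≃ₜ ↥(Set.Iic Ordinal.omega0.{0})) := by
  have : Infinite ↥((Set.range e)ᶜ) := hinf.to_subtype
  let g : OmegaSucc → ↥((Set.range e)ᶜ) := fun n => ⟨colLim e n, colLim_notMem_range he n⟩
  have hg : Continuous g := (continuous_colLim he.continuous).subtype_mk _
  have hsurj : Function.Surjective g := fun ⟨y, hy⟩ => by
    obtain ⟨n, rfl⟩ := mem_range_colLim he hd hy
    exact ⟨n, rfl⟩
  exact nonempty_homeomorph_omegaSucc_of_surjective hg hsurj
end

section
/- Let X be a locally compact, non-compact Hausdorff space whose one-point compactification is radial at the point at infinity ⋆. Then for every closed non-compact subset A ⊆ X there exists a closed non-compact subset S ⊆ A such that the compact subsets of S contain a cofinal chain under inclusion (i.e., S is a spoke at infinity). -/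
/-!
Let `κ` be the least length of an ordinal-indexed net in `A` converging to `⋆`. Composing such a
net with a fundamental sequence gives one of length `cof κ`, so `κ` is an initial ordinal; and a
subset `E ⊆ A` with `#E < card κ` has compact closure, for otherwise radiality yields a net in `E`
converging to `⋆`, whose length has cofinality at most `#E`, giving a net in `A` shorter than `κ`.
For a net `x` of length `κ`, the closure `S` of its range is not compact, and the closures of the
initial segments `{x j | j < β}` form a chain of compact subsets of `S`. The chain is cofinal: a
compact `K ⊆ S` lies in the interior of a compact `K'`, the net leaves `K'` after some `β`, and
then `K ⊆ closure (interior K' ∩ range x) ⊆ closure {x j | j < β}`.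
-/

open Filter Topology Set

universe u v

universe w

open Cardinal

theorem Order.cof_le_lift_mk_range_of_tendsto_cofinite {ι : Type v} {α : Type w}
    [LinearOrder ι] [Nonempty ι] {f : ι → α} (hf : Tendsto f atTop cofinite) :
    lift.{w} (Order.cof ι) ≤ lift.{v} #(range f) := by
  have hleave : ∀ y : range f, ∃ b, ∀ i ≥ b, f i ≠ y := fun y =>
    eventually_atTop.1 (hf (eventually_cofinite_ne y.1))
  choose b hb using hleave
  have hcofinal : IsCofinal (range b) := fun i =>
    ⟨b ⟨f i, mem_range_self i⟩, mem_range_self _,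
      le_of_not_ge fun hle => hb ⟨f i, mem_range_self i⟩ i hle rfl⟩
  exact (lift_le.2 (Order.cof_le hcofinal)).trans mk_range_le_lift

theorem Ordinal.exists_tendsto_atTop_Iio_ord_cof (o : Ordinal) :
    ∃ g : Iio o.cof.ord → Iio o, Tendsto g atTop atTop := by
  obtain ⟨g, hg⟩ := Ordinal.exists_isFundamentalSeq (o := o) rfl
  refine ⟨g, tendsto_atTop_atTop_of_monotone hg.strictMono.monotone fun b => ?_⟩
  obtain ⟨_, ⟨c, rfl⟩, hbc⟩ := hg.isCofinal_range b
  exact ⟨c, hbc⟩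

theorem Ordinal.mk_image_Iio_lt_card {α : Type u} {κ : Ordinal.{u}} (hκ : κ.card.ord = κ)
    (f : Iio κ → α) (b : Iio κ) : #(f '' Iio b) < κ.card := by
  have hb : #(Iio b) < #(Iio κ) :=
    mk_Iio_lt b (by rw [Cardinal.mk_Iio_ordinal, ← lift_ord, hκ, type_lt_Iio])
  refine Cardinal.lift_lt.{u, u + 1}.1 (mk_image_le_lift.trans_lt ?_)
  rwa [Cardinal.mk_Iio_ordinal, ← Cardinal.lift_id'.{u, u + 1} #(Iio b)] at hb

section

variable {X : Type u} [TopologicalSpace X]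

/-- A net of length `o` in `A` converging to `⋆`, read in `X`: `cocompact X` is the trace of
`𝓝 ⋆` on `X`. The empty net, which converges vacuously, is excluded by `o ≠ 0`. -/
def HasEscapingNet (A : Set X) (o : Ordinal.{u}) : Prop :=
  o ≠ 0 ∧ ∃ f : Iio o → X, (∀ i, f i ∈ A) ∧ Tendsto f atTop (cocompact X)

variable {A B : Set X} {o : Ordinal.{u}}

theorem HasEscapingNet.mono (h : HasEscapingNet A o) (hAB : A ⊆ B) : HasEscapingNet B o :=
  let ⟨ho, f, hfA, hf⟩ := h
  ⟨ho, f, fun i => hAB (hfA i), hf⟩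

theorem HasEscapingNet.ord_cof (h : HasEscapingNet A o) : HasEscapingNet A o.cof.ord := by
  obtain ⟨ho, f, hfA, hf⟩ := h
  obtain ⟨g, hg⟩ := Ordinal.exists_tendsto_atTop_Iio_ord_cof o
  exact ⟨by simpa using ho, f ∘ g, fun i => hfA (g i), hf.comp hg⟩

theorem HasEscapingNet.cof_le_mk (h : HasEscapingNet A o) : o.cof ≤ #A := by
  obtain ⟨ho, f, hfA, hf⟩ := h
  have : Nonempty (Iio o) := ⟨⟨0, pos_iff_ne_zero.2 ho⟩⟩
  have hcof := Order.cof_le_lift_mk_range_of_tendsto_cofinite (hf.mono_right cocompact_le_cofinite)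
  rw [Ordinal.cof_Iio, ← Ordinal.lift_cof, lift_lift, Cardinal.lift_le] at hcof
  exact hcof.trans (mk_le_mk_of_subset (range_subset_iff.2 hfA))

theorem RadialAt.exists_hasEscapingNet [T2Space X] (hrad : RadialAt (OnePoint X) OnePoint.infty)
    {E : Set X} (hE : ¬ IsCompact (closure E)) : ∃ o, HasEscapingNet E o := by
  have hmem : (OnePoint.infty : OnePoint X) ∈ closure (((↑) : X → OnePoint X) '' E) := by
    have hfreq : ∃ᶠ x in comap ((↑) : X → OnePoint X) (𝓝 OnePoint.infty), x ∈ E := by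
      rw [OnePoint.comap_coe_nhds_infty]
      exact fun h => hE (compl_mem_coclosedCompact.1 h)
    exact mem_closure_iff_frequently.2
      ((frequently_comap.1 hfreq).mono fun y ⟨x, hxy, hxE⟩ => ⟨x, hxE, hxy⟩)
  obtain ⟨o, f, ho, hfE, hf⟩ := hrad _ hmem
  choose g hgE hgf using hfE
  refine ⟨o, ho, g, hgE, ?_⟩
  rw [← coclosedCompact_eq_cocompact, ← OnePoint.comap_coe_nhds_infty, tendsto_comap_iff]
  simpa only [Function.comp_def, hgf] using hf

theorem RadialAt.exists_hasEscapingNet_isCompact_closure_of_mk_lt [T2Space X]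
    (hrad : RadialAt (OnePoint X) OnePoint.infty) (hA : ¬ IsCompact (closure A)) :
    ∃ κ : Ordinal.{u}, κ.card.ord = κ ∧ HasEscapingNet A κ ∧
      ∀ E ⊆ A, #E < κ.card → IsCompact (closure E) := by
  obtain ⟨o, ho⟩ := hrad.exists_hasEscapingNet hA
  set κ := sInf {o | HasEscapingNet A o}
  have hκ : HasEscapingNet A κ := csInf_mem (s := {o | HasEscapingNet A o}) ⟨o, ho⟩
  have hmin : ∀ o, HasEscapingNet A o → κ ≤ o := fun o h => csInf_le' h
  have hcof : κ.cof.ord = κ := (Ordinal.ord_cof_le κ).antisymm (hmin _ hκ.ord_cof)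
  have hcard : κ.card = κ.cof := by
    conv_lhs => rw [← hcof]
    exact card_ord _
  refine ⟨κ, by rw [hcard, hcof], hκ, fun E hEA hE => ?_⟩
  by_contra hnc
  obtain ⟨o', ho'⟩ := hrad.exists_hasEscapingNet hnc
  have hlt : o'.cof.ord < κ := by
    rw [← hcof]
    exact ord_lt_ord.2 (ho'.cof_le_mk.trans_lt (hcard ▸ hE))
  exact hlt.not_ge (hmin _ (ho'.mono hEA).ord_cof)

/-- For closed `S`, this says that `S` is a spoke at infinity. -/
def HasCofinalCompactChain (S : Set X) : Prop :=
  ∃ C : Set (Set X), (∀ K ∈ C, IsCompact K ∧ K ⊆ S) ∧ IsChain (· ⊆ ·) C ∧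
    ∀ K : Set X, IsCompact K → K ⊆ S → ∃ L ∈ C, K ⊆ L

theorem not_isCompact_closure_range_of_tendsto_cocompact {ι : Type*} {l : Filter ι} [l.NeBot]
    {f : ι → X} (hf : Tendsto f l (cocompact X)) : ¬ IsCompact (closure (range f)) := fun hK =>
  let ⟨i, hi⟩ := (hf.eventually_mem hK.compl_mem_cocompact).exists
  hi (subset_closure (mem_range_self i))

theorem hasCofinalCompactChain_closure_range [WeaklyLocallyCompactSpace X] {ι : Type*}
    [LinearOrder ι] [Nonempty ι] {f : ι → X} (hf : Tendsto f atTop (cocompact X))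
    (hcpt : ∀ b, IsCompact (closure (f '' Iio b))) :
    HasCofinalCompactChain (closure (range f)) := by
  refine ⟨range fun b => closure (f '' Iio b), ?_, ?_, ?_⟩
  · rintro _ ⟨b, rfl⟩
    exact ⟨hcpt b, closure_mono (image_subset_range _ _)⟩
  · exact Monotone.isChain_range fun b c hbc => closure_mono (image_mono (Iio_subset_Iio hbc))
  · intro K hK hKS
    obtain ⟨K', hK', hKK'⟩ := exists_compact_superset hK
    obtain ⟨b, hb⟩ := eventually_atTop.1 (hf hK'.compl_mem_cocompact)
    refine ⟨_, mem_range_self b, fun x hx => ?_⟩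
    have hx' : x ∈ closure (interior K' ∩ range f) :=
      isOpen_interior.inter_closure ⟨hKK' hx, hKS hx⟩
    refine closure_mono ?_ hx'
    rintro _ ⟨hiK', i, rfl⟩
    exact ⟨i, lt_of_not_ge fun hbi => hb i hbi (interior_subset hiK'), rfl⟩

end

theorem stmt16_general {X : Type u} [TopologicalSpace X] [T2Space X] [LocallyCompactSpace X]
    (hrad : RadialAt (OnePoint X) OnePoint.infty)
    (A : Set X) (hA : IsClosed A) (hnc : ¬ IsCompact A) :
    ∃ S : Set X, S ⊆ A ∧ IsClosed S ∧ ¬ IsCompact S ∧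
      ∃ C : Set (Set X), (∀ K ∈ C, IsCompact K ∧ K ⊆ S) ∧ IsChain (· ⊆ ·) C ∧
        ∀ K : Set X, IsCompact K → K ⊆ S → ∃ L ∈ C, K ⊆ L := by
  obtain ⟨κ, hκ, ⟨hκ0, f, hfA, hf⟩, hsmall⟩ :=
    hrad.exists_hasEscapingNet_isCompact_closure_of_mk_lt (by rwa [hA.closure_eq])
  have : Nonempty (Iio κ) := ⟨⟨0, pos_iff_ne_zero.2 hκ0⟩⟩
  have hrange : range f ⊆ A := range_subset_iff.2 hfA
  have hsegments : ∀ b, IsCompact (closure (f '' Iio b)) := fun b =>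
    hsmall _ ((image_subset_range _ _).trans hrange) (Ordinal.mk_image_Iio_lt_card hκ f b)
  exact ⟨closure (range f), closure_minimal hrange hA, isClosed_closure,
    not_isCompact_closure_range_of_tendsto_cocompact hf,
    hasCofinalCompactChain_closure_range hf hsegments⟩

theorem stmt16 {X : Type u} [TopologicalSpace X] [T2Space X] [LocallyCompactSpace X]
    [NoncompactSpace X]
    (hrad : RadialAt (OnePoint X) OnePoint.infty)
    (A : Set X) (hA : IsClosed A) (hnc : ¬ IsCompact A) :
    ∃ S : Set X, S ⊆ A ∧ IsClosed S ∧ ¬ IsCompact S ∧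
      ∃ C : Set (Set X), (∀ K ∈ C, IsCompact K ∧ K ⊆ S) ∧ IsChain (· ⊆ ·) C ∧
        ∀ K : Set X, IsCompact K → K ⊆ S → ∃ L ∈ C, K ⊆ L :=
  stmt16_general hrad A hA hnc
end

section
/- Let X be a locally compact non-compact Hausdorff space with one-point compactification αX radial at ⋆, and let φX be a Hausdorff compactification of X with finite remainder. Then φX is radial at every point of φX \ X. -/
open Filter Topology Set

universe u v

/-!
The point `z` has a closed neighbourhood `t` meeting the remainder only in `z`, and we may
assume that `A ⊆ t ∩ X`. As `z` lies in the closure of `A` but outside `X`, the set `A` is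
contained in no compact subset of `X`, so `⋆` lies in its closure in `αX`. A transfinite
sequence in `A` converging to `⋆` leaves every compact subset of `X`; since `t` minus any open
neighbourhood of `z` is such a compact set, the same sequence converges to `z` in `φX`.

The sequence is indexed by an ordinal of the universe of `X`, while radiality of `φX` asks for
one in the universe of `φX`. It is reindexed along a cofinal subset of its index set, of
cardinality at most that of `φX`: since `z ∉ A`, no value is taken cofinally often, so the
indices after which each point of `φX` is no longer taken form such a subset.
-/

open scoped OnePoint

theorem exists_ordinal_tendsto_atTop_of_isCofinal {α : Type u} [LinearOrder α]
    [WellFoundedLT α] [Nonempty α] {S : Set α} [Small.{v} S] (hS : IsCofinal S) :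
    ∃ (o : Ordinal.{v}) (M : Iio o → α), o ≠ 0 ∧ Tendsto M atTop atTop := by
  have : Nonempty (Shrink.{v} S) := (equivShrink S).nonempty_congr.1 hS.nonempty.to_subtype
  let E : Iio (Ordinal.type (α := Shrink.{v} S) (· < ·)) ≃o S :=
    (OrderIso.ofRelIsoLT (Ordinal.enum (· < ·))).trans (orderIsoShrink S).symm
  refine ⟨_, fun i => E i, Ordinal.type_ne_zero_of_nonempty _, ?_⟩
  refine tendsto_atTop_atTop_of_monotone (fun i j hij => E.monotone hij) fun a => ?_
  obtain ⟨s, hs, has⟩ := hS a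
  exact ⟨E.symm ⟨s, hs⟩, by simpa using has⟩

theorem exists_ordinal_tendsto_atTop_of_eventually_ne {α : Type u} [LinearOrder α]
    [WellFoundedLT α] [Nonempty α] {Y : Type v} (f : α → Y)
    (hf : ∀ y, ∀ᶠ i in atTop, f i ≠ y) :
    ∃ (o : Ordinal.{v}) (M : Iio o → α), o ≠ 0 ∧ Tendsto M atTop atTop := by
  choose l hl using fun y => eventually_atTop.1 (hf y)
  refine exists_ordinal_tendsto_atTop_of_isCofinal (S := range l) fun a => ⟨l (f a), ?_, ?_⟩
  · exact mem_range_self _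
  · exact (le_total a (l (f a))).resolve_right fun h => hl (f a) a h rfl

theorem exists_ordinal_tendsto_of_tendsto {Y : Type v} [TopologicalSpace Y] [T1Space Y]
    {α : Type u} [LinearOrder α] [WellFoundedLT α] [Nonempty α] {f : α → Y} {z : Y}
    {A : Set Y} (hfA : ∀ i, f i ∈ A) (hzA : z ∉ A) (hf : Tendsto f atTop (𝓝 z)) :
    ∃ (o : Ordinal.{v}) (g : Iio o → Y), o ≠ 0 ∧ (∀ i, g i ∈ A) ∧ Tendsto g atTop (𝓝 z) := by
  have hne : ∀ y, ∀ᶠ i in atTop, f i ≠ y := by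
    intro y
    rcases eq_or_ne z y with rfl | hzy
    · exact Eventually.of_forall fun i hi => hzA (hi ▸ hfA i)
    · exact hf.eventually_ne hzy
  obtain ⟨o, M, ho, hM⟩ := exists_ordinal_tendsto_atTop_of_eventually_ne f hne
  exact ⟨o, f ∘ M, ho, fun i => hfA (M i), hf.comp hM⟩

theorem exists_isClosed_mem_nhds_diff_subset_singleton {γ : Type*} [TopologicalSpace γ]
    [T1Space γ] [RegularSpace γ] {S : Set γ} (hS : Sᶜ.Finite) (z : γ) :
    ∃ t ∈ 𝓝 z, IsClosed t ∧ t \ S ⊆ {z} := by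
  have hF : (Sᶜ \ {z})ᶜ ∈ 𝓝 z :=
    hS.sdiff.isClosed.isOpen_compl.mem_nhds fun h => h.2 rfl
  obtain ⟨t, htz, htc, htF⟩ := exists_mem_nhds_isClosed_subset hF
  exact ⟨t, htz, htc, fun y hy => by_contra fun hyz => htF hy.1 ⟨hy.2, hyz⟩⟩

theorem OnePoint.infty_mem_closure_image_coe {X γ : Type*} [TopologicalSpace X]
    [TopologicalSpace γ] [T2Space γ] {e : X → γ} (he : Continuous e) {B : Set X} {z : γ}
    (hz : z ∉ range e) (hzB : z ∈ closure (e '' B)) :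
    (∞ : OnePoint X) ∈ closure ((↑) '' B) := by
  rw [mem_closure_iff_nhds_basis OnePoint.hasBasis_nhds_infty]
  rintro K ⟨-, hK⟩
  obtain ⟨x, hxB, hxK⟩ : ∃ x ∈ B, x ∉ K := by
    by_contra! hBK
    have hzK := (hK.image he).isClosed.closure_subset_iff.2 (image_mono hBK) hzB
    exact hz (image_subset_range e K hzK)
  exact ⟨x, mem_image_of_mem _ hxB, Or.inl (mem_image_of_mem _ hxK)⟩

theorem RadialAt.exists_tendsto_coclosedCompact {X : Type u} [TopologicalSpace X]
    (hrad : RadialAt (OnePoint X) ∞) {B : Set X} (hB : (∞ : OnePoint X) ∈ closure ((↑) '' B)) :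
    ∃ (o : Ordinal.{u}) (x : Iio o → X), o ≠ 0 ∧ (∀ i, x i ∈ B) ∧
      Tendsto x atTop (coclosedCompact X) := by
  obtain ⟨o, f, ho, hfB, hf⟩ := hrad _ hB
  choose x hxB hxf using hfB
  refine ⟨o, x, ho, hxB, ?_⟩
  rw [← OnePoint.comap_coe_nhds_infty, tendsto_comap_iff]
  simpa [Function.comp_def, hxf] using hf

theorem tendsto_nhds_of_tendsto_coclosedCompact {X γ ι : Type*} [TopologicalSpace X]
    [TopologicalSpace γ] [CompactSpace γ] {e : X → γ} (he : IsInducing e) {t : Set γ}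
    (ht : IsClosed t) {z : γ} (htz : t \ range e ⊆ {z}) {l : Filter ι} {x : ι → X}
    (hx : Tendsto x l (coclosedCompact X)) (hxt : ∀ᶠ i in l, e (x i) ∈ t) :
    Tendsto (e ∘ x) l (𝓝 z) := by
  rw [tendsto_nhds]
  intro V hV hzV
  have hC : IsClosed (t \ V) := ht.sdiff hV
  have hCe : t \ V ⊆ range e := fun y hy =>
    by_contra fun hy' => hy.2 ((htz ⟨hy.1, hy'⟩ : y = z) ▸ hzV)
  have hK : (e ⁻¹' (t \ V))ᶜ ∈ coclosedCompact X :=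
    hasBasis_coclosedCompact.mem_of_mem
      ⟨hC.preimage he.continuous, he.isCompact_preimage' hC.isCompact hCe⟩
  filter_upwards [hx hK, hxt] with i hiK hit
  by_contra hiV
  exact hiK ⟨hit, hiV⟩

theorem stmt19_general {X : Type u} [TopologicalSpace X]
    (hrad : RadialAt (OnePoint X) OnePoint.infty)
    {γ : Type v} [TopologicalSpace γ] [CompactSpace γ] [T2Space γ]
    (e : X → γ) (he : Topology.IsEmbedding e)
    (hfin : ((Set.range e)ᶜ).Finite) :
    ∀ z ∈ (Set.range e)ᶜ, RadialAt γ z := by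
  intro z hz A hzA
  by_cases hzA' : z ∈ A
  · exact ⟨1, fun _ => z, one_ne_zero, fun _ => hzA', tendsto_const_nhds⟩
  obtain ⟨t, htz, htc, htr⟩ := exists_isClosed_mem_nhds_diff_subset_singleton hfin z
  have hAt : A ∩ t ⊆ range e := fun y hy => by_contra fun hy' => hzA' (htr ⟨hy.2, hy'⟩ ▸ hy.1)
  have hzB : z ∈ closure (e '' (e ⁻¹' (A ∩ t))) := by
    rw [image_preimage_eq_of_subset hAt, mem_closure_iff_nhdsWithin_neBot,
      nhdsWithin_inter_of_mem' (mem_nhdsWithin_of_mem_nhds htz)]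
    exact mem_closure_iff_nhdsWithin_neBot.1 hzA
  obtain ⟨o, x, ho, hxB, hx⟩ := RadialAt.exists_tendsto_coclosedCompact hrad
    (OnePoint.infty_mem_closure_image_coe he.continuous hz hzB)
  have : Nonempty (Iio o) := ⟨⟨0, pos_iff_ne_zero.2 ho⟩⟩
  exact exists_ordinal_tendsto_of_tendsto (fun i => (hxB i).1) hzA'
    (tendsto_nhds_of_tendsto_coclosedCompact he.isInducing htc htr hx
      (Eventually.of_forall fun i => (hxB i).2))

theorem stmt19 {X : Type u} [TopologicalSpace X] [T2Space X] [LocallyCompactSpace X]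
    [NoncompactSpace X]
    (hrad : RadialAt (OnePoint X) OnePoint.infty)
    {γ : Type v} [TopologicalSpace γ] [CompactSpace γ] [T2Space γ]
    (e : X → γ) (he : Topology.IsEmbedding e) (hd : DenseRange e)
    (hfin : ((Set.range e)ᶜ).Finite) :
    ∀ z ∈ (Set.range e)ᶜ, RadialAt γ z :=
  stmt19_general hrad e he hfin
end
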